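/- arXiv:2603.05408 — 7 statements merged into one kernel-verified Lean document; each statement's English description precedes it below -/
import Mathlib

section
/- Let N be an even positive integer. For each i with 0 ≤ i ≤ N, the Lagrange basis polynomial ℓ_i(x) = ∏_{j=0, j≠i}^{N} (x - (j - N/2))/(i - j) on the nodes {-N/2, -N/2+1, ..., N/2} satisfies ℓ_i(x) = C(N/2 + x, i) · C(N/2 - x, N - i). Consequently, the Lagrange interpolating polynomial I_N of the points {(i - N/2, sgn(i - N/2)) : 0 ≤ i ≤ N} is I_N(x) = ∑_{i=0}^{N} sgn(i - N/2) C(N/2 + x, i) C(N/2 - x, N - i). -/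
/-!
On the shifted nodes `j - c`, `0 ≤ j ≤ N`, the Lagrange basis polynomial `ℓ_i` splits into the
factors with `j < i` and those with `j > i`. The denominators of the first block multiply to `i!`,
so that block is `C(c + x, i)`; reindexing the second block by `j = N - m` turns it into
`C(N - c - x, N - i)` in the same way. For `c = N/2` this is the binomial formula, and the
interpolating polynomial follows termwise.
-/

/-- Generalized binomial coefficient `C(z,k) = z(z-1)⋯(z-k+1)/k!`. -/
noncomputable def gch (z : ℝ) (k : ℕ) : ℝ :=
  (∏ i ∈ Finset.range k, (z - i)) / (Nat.factorial k)

open Finset Nat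

lemma prod_range_natCast_sub_eq_factorial {R : Type*} [CommRing R] (n : ℕ) :
    ∏ j ∈ range n, ((n : R) - j) = n ! := by
  rw [← descPochhammer_eval_eq_prod_range, descPochhammer_eval_eq_descFactorial,
    descFactorial_self]

lemma gch_eq_prod_div (z : ℝ) (n : ℕ) : gch z n = ∏ j ∈ range n, (z - j) / (n - j) := by
  rw [prod_div_distrib, prod_range_natCast_sub_eq_factorial, gch]

lemma prod_range_erase_eq_prod_range_mul_prod_Ico {M : Type*} [CommMonoid M] (f : ℕ → M)
    {i n : ℕ} (hi : i < n) :
    ∏ j ∈ (range n).erase i, f j = (∏ j ∈ range i, f j) * ∏ j ∈ Ico (i + 1) n, f j := by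
  have hsplit : (range n).erase i = range i ∪ Ico (i + 1) n := by
    ext j
    simp only [mem_erase, mem_range, mem_union, mem_Ico]
    omega
  rw [hsplit, prod_union (disjoint_left.mpr fun j hj hj' => by simp at hj hj'; omega)]

lemma prod_range_node_div_eq_gch (c x : ℝ) (i : ℕ) :
    ∏ j ∈ range i, (x - ((j : ℝ) - c)) / ((i : ℝ) - j) = gch (c + x) i := by
  rw [gch_eq_prod_div]
  exact prod_congr rfl fun j _ => by ring

lemma prod_Ico_node_div_eq_gch (c x : ℝ) {i N : ℕ} (hi : i ≤ N) :
    ∏ j ∈ Ico (i + 1) (N + 1), (x - ((j : ℝ) - c)) / ((i : ℝ) - j)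
      = gch (N - c - x) (N - i) := by
  have hreflect := prod_Ico_reflect (fun j : ℕ => (x - ((j : ℝ) - c)) / ((i : ℝ) - j)) 0
    (m := N - i) (n := N) (by omega)
  rw [show N + 1 - (N - i) = i + 1 by omega, Nat.sub_zero, Ico_zero_eq_range] at hreflect
  rw [← hreflect, gch_eq_prod_div, Nat.cast_sub hi]
  refine prod_congr rfl fun m hm => ?_
  rw [Nat.cast_sub (by rw [mem_range] at hm; omega), ← neg_div_neg_eq]
  congr 1 <;> ring

lemma prod_erase_node_div_eq_gch_mul_gch (c x : ℝ) {i N : ℕ} (hi : i ≤ N) :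
    ∏ j ∈ (range (N + 1)).erase i, (x - ((j : ℝ) - c)) / ((i : ℝ) - j)
      = gch (c + x) i * gch (N - c - x) (N - i) := by
  rw [prod_range_erase_eq_prod_range_mul_prod_Ico _ (Nat.lt_succ_of_le hi),
    prod_range_node_div_eq_gch, prod_Ico_node_div_eq_gch c x hi]

theorem lagrange_basis_binomial_general (N : ℕ) :
    (∀ i ≤ N, ∀ x : ℝ,
      (∏ j ∈ (Finset.range (N + 1)).erase i,
          (x - ((j : ℝ) - (N : ℝ) / 2)) / ((i : ℝ) - (j : ℝ)))
        = gch ((N : ℝ) / 2 + x) i * gch ((N : ℝ) / 2 - x) (N - i)) ∧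
    (∀ x : ℝ,
      (∑ i ∈ Finset.range (N + 1),
        Real.sign ((i : ℝ) - (N : ℝ) / 2) *
          ∏ j ∈ (Finset.range (N + 1)).erase i,
            (x - ((j : ℝ) - (N : ℝ) / 2)) / ((i : ℝ) - (j : ℝ)))
      = ∑ i ∈ Finset.range (N + 1),
          Real.sign ((i : ℝ) - (N : ℝ) / 2) *
            (gch ((N : ℝ) / 2 + x) i * gch ((N : ℝ) / 2 - x) (N - i))) := by
  have basis : ∀ i ≤ N, ∀ x : ℝ,
      (∏ j ∈ (range (N + 1)).erase i, (x - ((j : ℝ) - (N : ℝ) / 2)) / ((i : ℝ) - (j : ℝ)))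
        = gch ((N : ℝ) / 2 + x) i * gch ((N : ℝ) / 2 - x) (N - i) := by
    intro i hi x
    rw [prod_erase_node_div_eq_gch_mul_gch _ x hi, show (N : ℝ) - N / 2 - x = N / 2 - x by ring]
  exact ⟨basis, fun x => sum_congr rfl fun i hi => by
    rw [basis i (Nat.lt_succ_iff.mp (mem_range.mp hi)) x]⟩

/-- The Lagrange basis polynomials on the nodes `{-N/2, ..., N/2}` satisfy
`ℓ_i(x) = C(N/2+x, i) C(N/2-x, N-i)`; consequently the Lagrange interpolating
polynomial of the points `(i - N/2, sgn(i - N/2))`, `0 ≤ i ≤ N`, is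
`I_N(x) = ∑_{i=0}^N sgn(i - N/2) C(N/2+x, i) C(N/2-x, N-i)`. -/
theorem lagrange_basis_binomial (N : ℕ) (hN : 0 < N) (hNe : Even N) :
    (∀ i ≤ N, ∀ x : ℝ,
      (∏ j ∈ (Finset.range (N + 1)).erase i,
          (x - ((j : ℝ) - (N : ℝ) / 2)) / ((i : ℝ) - (j : ℝ)))
        = gch ((N : ℝ) / 2 + x) i * gch ((N : ℝ) / 2 - x) (N - i)) ∧
    (∀ x : ℝ,
      (∑ i ∈ Finset.range (N + 1),
        Real.sign ((i : ℝ) - (N : ℝ) / 2) *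
          ∏ j ∈ (Finset.range (N + 1)).erase i,
            (x - ((j : ℝ) - (N : ℝ) / 2)) / ((i : ℝ) - (j : ℝ)))
      = ∑ i ∈ Finset.range (N + 1),
          Real.sign ((i : ℝ) - (N : ℝ) / 2) *
            (gch ((N : ℝ) / 2 + x) i * gch ((N : ℝ) / 2 - x) (N - i))) :=
  lagrange_basis_binomial_general N
end

section
/- Let m, N ≥ 1 be integers with N even and m ≤ N. If m is odd, then the derivative of the shifted Krawtchouk polynomial at 0 satisfies k_m'(0;N) = 2^{1-m} · ∑_{ℓ=0}^{(m-1)/2} (-1)^ℓ · C(N/2, ℓ) / (m - 2ℓ), and if m is even, then k_m'(0;N) = 0. -/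
/-- Shifted Krawtchouk polynomial at `p = 1/2`:
`k_n(x;N) = 2^{-n} ∑_{v=0}^n (-1)^{n-v} C(N/2-x, n-v) C(N/2+x, v)`. -/
noncomputable def kfun (N n : ℕ) (x : ℝ) : ℝ :=
  (∑ v ∈ Finset.range (n + 1),
      (-1 : ℝ) ^ (n - v) * gch ((N : ℝ) / 2 - x) (n - v) * gch ((N : ℝ) / 2 + x) v) / 2 ^ n

/-- Discrete inner product `⟨f,g⟩ = 2^{-N} ∑_{y=-N/2}^{N/2} f(y) g(y) C(N, y+N/2)`. -/
noncomputable def innerK (N : ℕ) (f g : ℝ → ℝ) : ℝ :=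
  (∑ y ∈ Finset.range (N + 1),
      f ((y : ℝ) - (N : ℝ) / 2) * g ((y : ℝ) - (N : ℝ) / 2) * (N.choose y : ℝ)) / 2 ^ N

open Polynomial in
noncomputable def kdp (k : ℕ) : Polynomial ℝ :=
  C ((Nat.factorial k : ℝ))⁻¹ * ∏ i ∈ Finset.range k, (X - C (i : ℝ))

section PolyPart
open Polynomial

lemma kdp_eval (z : ℝ) (k : ℕ) : (kdp k).eval z = gch z k := by
  simp [kdp, gch, eval_prod, div_eq_mul_inv, mul_comm]

lemma gch_pascal (z : ℝ) (k : ℕ) : gch (z + 1) (k + 1) = gch z (k + 1) + gch z k := by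
  have hf : (((k+1).factorial : ℝ)) = (k+1) * (k.factorial : ℝ) := by
    rw [Nat.factorial_succ]; push_cast; ring
  have h1 : ∏ i ∈ Finset.range (k+1), (z + 1 - (i:ℝ))
      = (∏ i ∈ Finset.range k, (z - (i:ℝ))) * (z + 1) := by
    rw [Finset.prod_range_succ']
    congr 1
    · exact Finset.prod_congr rfl fun i _ => by push_cast; ring
    · norm_num
  have h2 : ∏ i ∈ Finset.range (k+1), (z - (i:ℝ))
      = (∏ i ∈ Finset.range k, (z - (i:ℝ))) * (z - k) := Finset.prod_range_succ _ _
  have hk0 : (k.factorial : ℝ) ≠ 0 := Nat.cast_ne_zero.2 k.factorial_ne_zero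
  have hk1 : ((k:ℝ) + 1) ≠ 0 := by positivity
  rw [gch, gch, gch, h1, h2, hf]
  field_simp
  ring

lemma kdp_comp_pascal (k : ℕ) : (kdp (k+1)).comp (X + 1) = kdp (k+1) + kdp k := by
  apply Polynomial.funext
  intro r
  simp only [eval_comp, eval_add, eval_X, eval_one, kdp_eval]
  exact gch_pascal r k

noncomputable def Dk (c k : ℕ) : ℝ := ((kdp k).derivative).eval (c : ℝ)

lemma Dk_zero (c : ℕ) : Dk c 0 = 0 := by
  simp [Dk, kdp]

lemma Dk_pascal (c k : ℕ) : Dk (c+1) (k+1) = Dk c (k+1) + Dk c k := by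
  have h := congrArg Polynomial.derivative (kdp_comp_pascal k)
  rw [Polynomial.derivative_comp] at h
  have h2 : Polynomial.derivative (X + 1 : Polynomial ℝ) = 1 := by simp
  rw [h2, one_mul] at h
  have h3 := congrArg (Polynomial.eval (c : ℝ)) h
  simp only [eval_comp, eval_add, eval_X, eval_one, derivative_add] at h3
  unfold Dk
  push_cast
  simpa using h3

lemma Dk_zero_succ (k : ℕ) : Dk 0 (k+1) = (-1)^k / (k+1) := by
  have hq : (∏ i ∈ Finset.range (k+1), (X - C (i:ℝ)))
      = (∏ i ∈ Finset.range k, (X - C ((i:ℝ)+1))) * X := by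
    rw [Finset.prod_range_succ']
    congr 1
    · exact Finset.prod_congr rfl fun i _ => by push_cast; ring
    · simp
  have hc : (kdp (k+1)).coeff 1 = ((k+1).factorial : ℝ)⁻¹ * ((-1)^k * k.factorial) := by
    rw [kdp, Polynomial.coeff_C_mul, hq, Polynomial.coeff_mul_X,
      Polynomial.coeff_zero_eq_eval_zero]
    congr 1
    rw [eval_prod]
    have : ∀ i ∈ Finset.range k, eval 0 (X - C ((i:ℝ)+1)) = -((i:ℝ)+1) := by
      intro i _; simp
    rw [Finset.prod_congr rfl this]
    have hneg : ∀ i ∈ Finset.range k, -((i:ℝ)+1) = (-1) * ((i:ℝ)+1) := fun i _ => by ring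
    rw [Finset.prod_congr rfl hneg, Finset.prod_mul_distrib, Finset.prod_const,
      Finset.card_range]
    congr 1
    have : ∏ i ∈ Finset.range k, ((i:ℝ) + 1) = ((∏ i ∈ Finset.range k, (i+1) : ℕ) : ℝ) := by
      push_cast; rfl
    rw [this, Finset.prod_range_add_one_eq_factorial]
  have : Dk 0 (k+1) = (kdp (k+1)).coeff 1 := by
    unfold Dk
    rw [Nat.cast_zero, ← Polynomial.coeff_zero_eq_eval_zero, Polynomial.coeff_derivative]
    push_cast; ring
  rw [this, hc, Nat.factorial_succ]
  have hk0 : (k.factorial : ℝ) ≠ 0 := Nat.cast_ne_zero.2 k.factorial_ne_zero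
  have hk1 : ((k:ℝ) + 1) ≠ 0 := by positivity
  push_cast
  field_simp

lemma gch_nat (c k : ℕ) : gch (c : ℝ) k = (c.choose k : ℝ) := by
  rcases le_or_gt k c with h | h
  · have hp : ∏ i ∈ Finset.range k, ((c:ℝ) - (i:ℝ)) = ((c.descFactorial k : ℕ) : ℝ) := by
      rw [Nat.descFactorial_eq_prod_range, Nat.cast_prod]
      exact Finset.prod_congr rfl fun i hi => by
        rw [Nat.cast_sub (le_of_lt (lt_of_lt_of_le (Finset.mem_range.1 hi) h))]
    rw [gch, hp, Nat.descFactorial_eq_factorial_mul_choose]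
    have hk0 : (k.factorial : ℝ) ≠ 0 := Nat.cast_ne_zero.2 k.factorial_ne_zero
    push_cast
    field_simp
  · rw [gch, Finset.prod_eq_zero (Finset.mem_range.2 h) (by simp), Nat.choose_eq_zero_of_lt h]
    simp

end PolyPart

section PSPart
open PowerSeries

noncomputable def Dg (c : ℕ) : PowerSeries ℝ := PowerSeries.mk fun k => Dk c k
noncomputable def Gg (c : ℕ) : PowerSeries ℝ := PowerSeries.mk fun k => (-1)^k * (c.choose k : ℝ)
noncomputable def Eg (c : ℕ) : PowerSeries ℝ :=
  PowerSeries.mk fun k => if Even k then (-1)^(k/2) * (c.choose (k/2) : ℝ) else 0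

lemma Gg_eq (c : ℕ) : Gg c = (1 - X)^c := by
  induction c with
  | zero =>
    ext k
    rcases k with _ | k <;> simp [Gg]
  | succ c ih =>
    rw [pow_succ, ← ih]
    ext k
    rw [mul_sub, mul_one]
    rcases k with _ | k
    · simp [Gg, mul_comm (Gg c) X]
    · rw [map_sub, mul_comm (Gg c) X, coeff_succ_X_mul]
      simp only [Gg, coeff_mk, Nat.choose_succ_succ]
      push_cast
      ring

lemma Eg_eq (c : ℕ) : Eg c = (1 - X^2)^c := by
  induction c with
  | zero =>
    ext k
    rcases k with _ | k
    · simp [Eg]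
    · simp only [Eg, coeff_mk, pow_zero, coeff_one, if_neg (Nat.succ_ne_zero k)]
      by_cases h : Even (k+1)
      · rw [if_pos h]
        have hpos : 0 < (k+1)/2 := by rcases h with ⟨s,hs⟩; omega
        rw [Nat.choose_eq_zero_of_lt hpos]
        simp
      · rw [if_neg h]
  | succ c ih =>
    rw [pow_succ, ← ih]
    ext k
    rw [mul_sub, mul_one, map_sub]
    match k with
    | 0 =>
      have h0 : (coeff 0) (Eg c * X^2) = 0 := by
        rw [mul_comm, pow_two, mul_assoc, coeff_zero_X_mul]
      rw [h0]
      simp [Eg]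
    | 1 =>
      have h0 : (coeff 1) (Eg c * X^2) = 0 := by
        rw [mul_comm, pow_two, mul_assoc, coeff_succ_X_mul, coeff_zero_X_mul]
      rw [h0]
      simp [Eg]
    | (k+2) =>
      rw [coeff_mul_X_pow (Eg c) 2 k]
      simp only [Eg, coeff_mk]
      by_cases h : Even k
      · have h1 : Even (2+k) := by rcases h with ⟨s,hs⟩; exact ⟨s+1, by omega⟩
        have h2 : Even (k+2) := by rcases h with ⟨s,hs⟩; exact ⟨s+1, by omega⟩
        have hd2 : (2+k)/2 = k/2 + 1 := by omega
        have hd : (k+2)/2 = k/2 + 1 := by omega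
        simp only [if_pos h, if_pos h1, if_pos h2, hd, hd2, Nat.choose_succ_succ]
        push_cast; ring
      · have h1 : ¬Even (2+k) := fun hh => by
          rcases hh with ⟨s,hs⟩; exact h ⟨s-1, by omega⟩
        have h2 : ¬Even (k+2) := fun hh => by
          rcases hh with ⟨s,hs⟩; exact h ⟨s-1, by omega⟩
        simp [h, h1, h2]

lemma Dg_succ (c : ℕ) : Dg (c+1) = (1 + X) * Dg c := by
  ext k
  rw [add_mul, one_mul, map_add]
  rcases k with _ | k
  · simp [Dg, Dk_zero]
  · rw [coeff_succ_X_mul]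
    simp only [Dg, coeff_mk]
    exact Dk_pascal c k

lemma master (c : ℕ) : (1 - X)^c * Dg c = (1 - X^2 : PowerSeries ℝ)^c * Dg 0 := by
  induction c with
  | zero => simp
  | succ c ih =>
    rw [Dg_succ, pow_succ, pow_succ]
    calc (1-X)^c * (1-X) * ((1+X) * Dg c)
        = ((1-X)*(1+X)) * ((1-X)^c * Dg c) := by ring
      _ = (1 - X^2) * ((1-X^2 : PowerSeries ℝ)^c * Dg 0) := by rw [ih]; congr 1; ring
      _ = (1-X^2)^c * (1-X^2) * Dg 0 := by ring

lemma sum_even_reindex (n : ℕ) (f : ℕ → ℝ) :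
    ∑ k ∈ Finset.range (2*n), (if Even k then f (k/2) else 0) = ∑ ℓ ∈ Finset.range n, f ℓ := by
  induction n with
  | zero => simp
  | succ n ih =>
    have h2 : 2*(n+1) = (2*n + 1) + 1 := by ring
    rw [h2, Finset.sum_range_succ, Finset.sum_range_succ, ih, Finset.sum_range_succ]
    have h3 : ¬ Even (2*n+1) := by simp [Nat.even_add_one]
    have h4 : Even (2*n) := ⟨n, by ring⟩
    rw [if_neg h3, if_pos h4]
    have : (2*n)/2 = n := by omega
    rw [this]
    ring

lemma key (c m : ℕ) (hm : Odd m) :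
    ∑ k ∈ Finset.range (m+1), (-1:ℝ)^k * (c.choose k : ℝ) * Dk c (m-k)
      = ∑ ℓ ∈ Finset.range ((m-1)/2 + 1), (-1:ℝ)^ℓ * (c.choose ℓ : ℝ) / ((m:ℝ) - 2*ℓ) := by
  have h1 : ∑ k ∈ Finset.range (m+1), (-1:ℝ)^k * (c.choose k : ℝ) * Dk c (m-k)
      = (coeff m) (Gg c * Dg c) := by
    rw [coeff_mul, Finset.Nat.sum_antidiagonal_eq_sum_range_succ_mk]
    exact Finset.sum_congr rfl fun k _ => by simp [Gg, Dg, mul_assoc]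
  rw [h1, Gg_eq, master, ← Eg_eq, coeff_mul, Finset.Nat.sum_antidiagonal_eq_sum_range_succ_mk]
  obtain ⟨t, ht⟩ := hm
  have hn : m + 1 = 2 * (t+1) := by omega
  have h2 : ∀ k ∈ Finset.range (m+1),
      (coeff (k, m-k).1) (Eg c) * (coeff (k, m-k).2) (Dg 0)
      = (if Even k then ((-1:ℝ)^(k/2) * (c.choose (k/2) : ℝ) * Dk 0 (m - 2*(k/2))) else 0) := by
    intro k hk
    simp only [Eg, Dg, coeff_mk]
    by_cases h : Even k
    · rw [if_pos h, if_pos h]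
      obtain ⟨s, hs⟩ := h
      have : m - k = m - 2*(k/2) := by omega
      rw [this, mul_assoc]
    · rw [if_neg h, if_neg h, zero_mul]
  rw [Finset.sum_congr rfl h2, hn,
    sum_even_reindex (t+1) (fun ℓ => (-1:ℝ)^ℓ * (c.choose ℓ : ℝ) * Dk 0 (m - 2*ℓ))]
  have hrange : (m-1)/2 + 1 = t + 1 := by omega
  rw [hrange]
  apply Finset.sum_congr rfl
  intro ℓ hℓ
  have hℓt : ℓ ≤ t := by simpa [Nat.lt_succ_iff] using Finset.mem_range.1 hℓ
  have hsub : m - 2*ℓ = (m - 2*ℓ - 1) + 1 := by omega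
  rw [hsub, Dk_zero_succ]
  have heven : Even (m - 2*ℓ - 1) := ⟨t - ℓ, by omega⟩
  rw [heven.neg_one_pow]
  have hcast : ((m - 2*ℓ - 1 : ℕ) : ℝ) + 1 = (m:ℝ) - 2*ℓ := by
    have : (m - 2*ℓ - 1) + 1 = m - 2*ℓ := by omega
    rw [← Nat.cast_add_one, this]
    push_cast [Nat.cast_sub (by omega : 2*ℓ ≤ m)]
    ring
  rw [hcast]
  ring
end PSPart

lemma hasDerivAt_gch_sub (a : ℝ) (k : ℕ) :
    HasDerivAt (fun x : ℝ => gch (a - x) k) (-(((kdp k).derivative).eval a)) 0 := by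
  have h1 : HasDerivAt (fun x : ℝ => a - x) (-1) 0 := by
    simpa using (hasDerivAt_id (0:ℝ)).const_sub a
  have h2 := ((kdp k).hasDerivAt (a - 0)).comp 0 h1
  have h3 : ((fun y => Polynomial.eval y (kdp k)) ∘ fun x : ℝ => a - x)
      = fun x => gch (a - x) k := by
    funext x; simp [Function.comp, kdp_eval]
  rw [h3] at h2
  simpa using h2

lemma hasDerivAt_gch_add (a : ℝ) (k : ℕ) :
    HasDerivAt (fun x : ℝ => gch (a + x) k) (((kdp k).derivative).eval a) 0 := by
  have h1 : HasDerivAt (fun x : ℝ => a + x) 1 0 := by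
    simpa using (hasDerivAt_id (0:ℝ)).const_add a
  have h2 := ((kdp k).hasDerivAt (a + 0)).comp 0 h1
  have h3 : ((fun y => Polynomial.eval y (kdp k)) ∘ fun x : ℝ => a + x)
      = fun x => gch (a + x) k := by
    funext x; simp [Function.comp, kdp_eval]
  rw [h3] at h2
  simpa using h2

lemma deriv_kfun (N m : ℕ) :
    deriv (kfun N m) 0 = (∑ v ∈ Finset.range (m+1), (-1:ℝ)^(m-v) *
      (gch ((N:ℝ)/2) (m-v) * ((kdp v).derivative).eval ((N:ℝ)/2)
        - ((kdp (m-v)).derivative).eval ((N:ℝ)/2) * gch ((N:ℝ)/2) v)) / 2^m := by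
  set a := (N:ℝ)/2 with ha
  have hk : kfun N m = fun x => (∑ v ∈ Finset.range (m+1),
      (-1:ℝ)^(m-v) * gch (a - x) (m-v) * gch (a + x) v) / 2^m := rfl
  rw [hk, deriv_div_const]
  congr 1
  have H : HasDerivAt (fun x : ℝ => ∑ v ∈ Finset.range (m+1),
      (-1:ℝ)^(m-v) * gch (a - x) (m-v) * gch (a + x) v)
      (∑ v ∈ Finset.range (m+1), (-1:ℝ)^(m-v) *
        (gch a (m-v) * ((kdp v).derivative).eval a
          - ((kdp (m-v)).derivative).eval a * gch a v)) 0 := by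
    apply HasDerivAt.fun_sum
    intro v hv
    have h3 := ((hasDerivAt_gch_sub a (m-v)).fun_mul (hasDerivAt_gch_add a v)).const_mul
      ((-1:ℝ)^(m-v))
    have h4 : (fun x : ℝ => (-1:ℝ)^(m-v) * (gch (a-x) (m-v) * gch (a+x) v))
        = fun x : ℝ => (-1:ℝ)^(m-v) * gch (a-x) (m-v) * gch (a+x) v := by
      funext x; ring
    rw [h4] at h3
    refine h3.congr_deriv ?_
    simp only [sub_zero, add_zero]
    ring
  rw [H.deriv]

lemma neg_pow_sub (m v : ℕ) (h : v ≤ m) : (-1:ℝ)^(m-v) = (-1)^m * (-1)^v := by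
  have h1 : (-1:ℝ)^(m-v) * (-1)^v = (-1)^m := by rw [← pow_add, Nat.sub_add_cancel h]
  have hv : (-1:ℝ)^v * (-1)^v = 1 := by
    rw [← pow_add]; exact Even.neg_one_pow ⟨v, rfl⟩
  calc (-1:ℝ)^(m-v) = (-1)^(m-v) * ((-1)^v * (-1)^v) := by rw [hv, mul_one]
    _ = (-1)^m * (-1)^v := by rw [← mul_assoc, h1]

/-- The derivative of the shifted Krawtchouk polynomial at `0`:
`k_m'(0;N) = 2^{1-m} ∑_{ℓ=0}^{(m-1)/2} (-1)^ℓ C(N/2, ℓ)/(m-2ℓ)` for odd `m`,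
and `0` for even `m`. -/
theorem krawtchouk_deriv_at_zero (N m : ℕ) (hm : 1 ≤ m) (hN : 0 < N) (hNe : Even N)
    (hmN : m ≤ N) :
    (Odd m → deriv (kfun N m) 0 =
        2 / 2 ^ m * ∑ ℓ ∈ Finset.range ((m - 1) / 2 + 1),
          (-1 : ℝ) ^ ℓ * ((N / 2).choose ℓ : ℝ) / ((m : ℝ) - 2 * ℓ)) ∧
    (Even m → deriv (kfun N m) 0 = 0) := by
  obtain ⟨c, hc⟩ := hNe
  have hc2 : N / 2 = c := by omega
  have hcr : (N : ℝ) / 2 = (c : ℝ) := by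
    rw [hc]; push_cast; ring
  have hder := deriv_kfun N m
  rw [hcr] at hder
  -- rewrite polynomial evals as Dk and gch as choose
  have hT : (∑ v ∈ Finset.range (m+1), (-1:ℝ)^(m-v) *
      (gch (c:ℝ) (m-v) * ((kdp v).derivative).eval (c:ℝ)
        - ((kdp (m-v)).derivative).eval (c:ℝ) * gch (c:ℝ) v))
      = (∑ v ∈ Finset.range (m+1), (-1:ℝ)^(m-v) * ((c.choose (m-v) : ℝ) * Dk c v))
        - (∑ v ∈ Finset.range (m+1), (-1:ℝ)^(m-v) * (Dk c (m-v) * (c.choose v : ℝ))) := by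
    rw [← Finset.sum_sub_distrib]
    exact Finset.sum_congr rfl fun v _ => by rw [gch_nat, gch_nat]; unfold Dk; ring
  rw [hT] at hder
  -- reflect the second sum
  have hrefl : (∑ v ∈ Finset.range (m+1), (-1:ℝ)^(m-v) * (Dk c (m-v) * (c.choose v : ℝ)))
      = ∑ v ∈ Finset.range (m+1), (-1:ℝ)^v * (Dk c v * (c.choose (m-v) : ℝ)) := by
    rw [← Finset.sum_range_reflect]
    apply Finset.sum_congr rfl
    intro v hv
    have hvm : v ≤ m := by
      have := Finset.mem_range.1 hv; omega
    have e1 : m + 1 - 1 - v = m - v := by omega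
    have e2 : m - (m - v) = v := by omega
    rw [e1, e2]
  rw [hrefl] at hder
  constructor
  · -- odd case
    intro hodd
    have hm1 : (-1:ℝ)^m = -1 := hodd.neg_one_pow
    -- first sum = 2 * A
    have hA : (∑ v ∈ Finset.range (m+1), (-1:ℝ)^(m-v) * ((c.choose (m-v) : ℝ) * Dk c v))
        - (∑ v ∈ Finset.range (m+1), (-1:ℝ)^v * (Dk c v * (c.choose (m-v) : ℝ)))
        = -2 * ∑ v ∈ Finset.range (m+1), (-1:ℝ)^v * ((c.choose (m-v) : ℝ) * Dk c v) := by
      rw [← Finset.sum_sub_distrib, Finset.mul_sum]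
      apply Finset.sum_congr rfl
      intro v hv
      have hvm : v ≤ m := by have := Finset.mem_range.1 hv; omega
      rw [neg_pow_sub m v hvm, hm1]
      ring
    rw [hA] at hder
    -- reflect once more
    have hrefl2 : (∑ v ∈ Finset.range (m+1), (-1:ℝ)^v * ((c.choose (m-v) : ℝ) * Dk c v))
        = ∑ v ∈ Finset.range (m+1), (-1:ℝ)^(m-v) * ((c.choose v : ℝ) * Dk c (m-v)) := by
      rw [← Finset.sum_range_reflect]
      apply Finset.sum_congr rfl
      intro v hv
      have hvm : v ≤ m := by have := Finset.mem_range.1 hv; omega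
      have e1 : m + 1 - 1 - v = m - v := by omega
      have e2 : m - (m - v) = v := by omega
      rw [e1, e2]
    rw [hrefl2] at hder
    have hA2 : (∑ v ∈ Finset.range (m+1), (-1:ℝ)^(m-v) * ((c.choose v : ℝ) * Dk c (m-v)))
        = - ∑ v ∈ Finset.range (m+1), (-1:ℝ)^v * (c.choose v : ℝ) * Dk c (m-v) := by
      rw [← Finset.sum_neg_distrib]
      apply Finset.sum_congr rfl
      intro v hv
      have hvm : v ≤ m := by have := Finset.mem_range.1 hv; omega
      rw [neg_pow_sub m v hvm, hm1]
      ring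
    rw [hA2, key c m hodd] at hder
    rw [hder, hc2, Finset.mul_sum, mul_neg, neg_mul, neg_neg, Finset.mul_sum,
      Finset.sum_div]
    apply Finset.sum_congr rfl
    intro ℓ _
    ring
  · -- even case
    intro heven
    have hm1 : (-1:ℝ)^m = 1 := heven.neg_one_pow
    have hz : (∑ v ∈ Finset.range (m+1), (-1:ℝ)^(m-v) * ((c.choose (m-v) : ℝ) * Dk c v))
        - (∑ v ∈ Finset.range (m+1), (-1:ℝ)^v * (Dk c v * (c.choose (m-v) : ℝ))) = 0 := by
      rw [← Finset.sum_sub_distrib]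
      apply Finset.sum_eq_zero
      intro v hv
      have hvm : v ≤ m := by have := Finset.mem_range.1 hv; omega
      rw [neg_pow_sub m v hvm, hm1]
      ring
    rw [hz] at hder
    rw [hder]
    simp
end

section
/- For all integers M ≥ 1, S(M) = T(M); that is, (1/2^{2M-1}) · C(2M, M) · ∑_{m=0}^{M-1} (-1)^m (C(M,m)/C(2M,2m)) · ∑_{ℓ=0}^{m} (-1)^ℓ C(M,ℓ)/(2m + 1 - 2ℓ) = 2 · ∑_{k=1}^{M} 1/(M + k). -/
open Finset

lemma pf (N : ℕ) : ∀ k : ℕ,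
    ∑ ℓ ∈ range (N + 1), (-1 : ℝ) ^ ℓ * (N.choose ℓ : ℝ) / (2 * (k : ℝ) + 2 * ℓ + 1)
      = 4 ^ N * N.factorial * (k + N).factorial * (2 * k).factorial /
        (k.factorial * (2 * k + 2 * N + 1).factorial) := by
  induction N with
  | zero =>
    intro k
    have h1 : ((2 * k + 1).factorial : ℝ) = (2 * (k:ℝ) + 1) * (2*k).factorial := by
      rw [Nat.factorial_succ]; push_cast; ring
    have h2 : ((2*k).factorial : ℝ) ≠ 0 := Nat.cast_ne_zero.2 (Nat.factorial_ne_zero _)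
    have h3 : (k.factorial : ℝ) ≠ 0 := Nat.cast_ne_zero.2 (Nat.factorial_ne_zero _)
    have h4 : (2 * (k:ℝ) + 1) ≠ 0 := by positivity
    rw [Finset.sum_range_one, show 2*k+2*0+1 = 2*k+1 from rfl, show k+0 = k from rfl, h1]
    push_cast
    field_simp
    rw [Nat.choose_self]; push_cast; ring
  | succ N ih =>
    intro k
    rw [Finset.sum_range_succ']
    have h1 : ∀ ℓ ∈ range (N + 1),
        (-1 : ℝ) ^ (ℓ+1) * ((N+1).choose (ℓ+1) : ℝ) / (2 * (k : ℝ) + 2 * ((ℓ+1:ℕ):ℝ) + 1)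
        = -((-1:ℝ)^ℓ * (N.choose ℓ : ℝ) / (2 * ((k+1:ℕ) : ℝ) + 2 * ℓ + 1))
          + (-1:ℝ)^(ℓ+1) * (N.choose (ℓ+1) : ℝ) / (2 * (k:ℝ) + 2 * ((ℓ+1:ℕ):ℝ) + 1) := by
      intro ℓ _
      rw [Nat.choose_succ_succ]
      push_cast
      ring
    rw [Finset.sum_congr rfl h1, Finset.sum_add_distrib]
    have h2 : ∑ ℓ ∈ range (N+1), -((-1:ℝ)^ℓ * (N.choose ℓ : ℝ) / (2 * ((k+1:ℕ) : ℝ) + 2 * ℓ + 1))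
        = -(4 ^ N * N.factorial * ((k+1) + N).factorial * (2 * (k+1)).factorial /
        ((k+1).factorial * (2 * (k+1) + 2 * N + 1).factorial)) := by
      rw [Finset.sum_neg_distrib, ih (k+1)]
    have h3 : (∑ ℓ ∈ range (N+1), (-1:ℝ)^(ℓ+1) * (N.choose (ℓ+1):ℝ)/(2*(k:ℝ)+2*((ℓ+1:ℕ):ℝ)+1))
        + (-1:ℝ)^(0:ℕ) * (((N+1).choose 0 : ℕ) : ℝ)/(2*(k:ℝ)+2*((0:ℕ):ℝ)+1)
        = 4 ^ N * N.factorial * (k + N).factorial * (2 * k).factorial /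
        (k.factorial * (2 * k + 2 * N + 1).factorial) := by
      have hs := Finset.sum_range_succ'
        (fun ℓ => (-1:ℝ)^ℓ * (N.choose ℓ : ℝ)/(2*(k:ℝ)+2*(ℓ:ℝ)+1)) (N+1)
      have htop : ∑ ℓ ∈ range (N+2), (-1:ℝ)^ℓ * (N.choose ℓ : ℝ)/(2*(k:ℝ)+2*(ℓ:ℝ)+1)
          = ∑ ℓ ∈ range (N+1), (-1:ℝ)^ℓ * (N.choose ℓ : ℝ)/(2*(k:ℝ)+2*(ℓ:ℝ)+1) := by
        rw [Finset.sum_range_succ, Nat.choose_succ_self]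
        simp
      rw [← ih k, ← htop, hs]
      norm_num
    rw [add_assoc, h3, h2]
    have e1 : ((k+1+N).factorial : ℝ) = ((k:ℝ)+N+1) * (k+N).factorial := by
      rw [show k+1+N = (k+N)+1 by ring, Nat.factorial_succ]; push_cast; ring
    have e2 : ((2*(k+1)).factorial : ℝ) = (2*(k:ℝ)+2)*(2*(k:ℝ)+1) * (2*k).factorial := by
      rw [show 2*(k+1) = (2*k+1)+1 by ring, Nat.factorial_succ, Nat.factorial_succ]; push_cast; ring
    have e3 : (((k+1)).factorial : ℝ) = ((k:ℝ)+1) * k.factorial := by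
      rw [Nat.factorial_succ]; push_cast; ring
    have e4 : ((2*(k+1)+2*N+1).factorial : ℝ)
        = (2*(k:ℝ)+2*N+3)*(2*(k:ℝ)+2*N+2) * (2*k+2*N+1).factorial := by
      rw [show 2*(k+1)+2*N+1 = ((2*k+2*N+1)+1)+1 by ring, Nat.factorial_succ, Nat.factorial_succ]
      push_cast; ring
    have e5 : ((2*k+2*(N+1)+1).factorial : ℝ)
        = (2*(k:ℝ)+2*N+3)*(2*(k:ℝ)+2*N+2) * (2*k+2*N+1).factorial := by
      rw [show 2*k+2*(N+1)+1 = ((2*k+2*N+1)+1)+1 by ring, Nat.factorial_succ, Nat.factorial_succ]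
      push_cast; ring
    have e6 : ((k+(N+1)).factorial : ℝ) = ((k:ℝ)+N+1) * (k+N).factorial := by
      rw [show k+(N+1) = (k+N)+1 by ring, Nat.factorial_succ]; push_cast; ring
    have e7 : ((N+1).factorial : ℝ) = ((N:ℝ)+1) * N.factorial := by
      rw [Nat.factorial_succ]; push_cast; ring
    have n1 : ((k+N).factorial : ℝ) ≠ 0 := Nat.cast_ne_zero.2 (Nat.factorial_ne_zero _)
    have n2 : ((2*k).factorial : ℝ) ≠ 0 := Nat.cast_ne_zero.2 (Nat.factorial_ne_zero _)
    have n3 : (k.factorial : ℝ) ≠ 0 := Nat.cast_ne_zero.2 (Nat.factorial_ne_zero _)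
    have n4 : ((2*k+2*N+1).factorial : ℝ) ≠ 0 := Nat.cast_ne_zero.2 (Nat.factorial_ne_zero _)
    have n5 : ((N:ℝ)+1) ≠ 0 := by positivity
    have n6 : ((k:ℝ)+1) ≠ 0 := by positivity
    have n7 : (2*(k:ℝ)+2*N+3) ≠ 0 := by positivity
    have n8 : (2*(k:ℝ)+2*N+2) ≠ 0 := by positivity
    have n9 : (N.factorial : ℝ) ≠ 0 := Nat.cast_ne_zero.2 (Nat.factorial_ne_zero _)
    rw [e1, e2, e3, e4, e5, e6, e7]
    push_cast
    field_simp
    ring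

noncomputable def aa (M k : ℕ) : ℝ :=
  ∑ ℓ ∈ Finset.range (k + 1),
    (-1 : ℝ) ^ ℓ * (M.choose ℓ : ℝ) / (2 * (k : ℝ) + 1 - 2 * (ℓ : ℝ))

lemma aa_zero (M : ℕ) : aa M 0 = 1 := by
  simp [aa]

lemma aa_rec (M k : ℕ) : aa (M + 1) (k + 1) = aa M (k + 1) - aa M k := by
  unfold aa
  rw [Finset.sum_range_succ']
  have h1 : ∀ ℓ ∈ range (k + 1),
      (-1:ℝ)^(ℓ+1) * (((M+1).choose (ℓ+1) : ℕ) : ℝ) / (2*((k+1:ℕ):ℝ)+1-2*((ℓ+1:ℕ):ℝ))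
      = -((-1:ℝ)^ℓ * ((M.choose ℓ : ℕ):ℝ) / (2*(k:ℝ)+1-2*(ℓ:ℝ)))
        + (-1:ℝ)^(ℓ+1) * ((M.choose (ℓ+1) : ℕ):ℝ) / (2*((k+1:ℕ):ℝ)+1-2*((ℓ+1:ℕ):ℝ)) := by
    intro ℓ _
    rw [Nat.choose_succ_succ]
    push_cast
    ring
  rw [Finset.sum_congr rfl h1, Finset.sum_add_distrib, Finset.sum_neg_distrib]
  have h3 : (∑ ℓ ∈ range (k+1), (-1:ℝ)^(ℓ+1) * ((M.choose (ℓ+1) : ℕ):ℝ) /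
        (2*((k+1:ℕ):ℝ)+1-2*((ℓ+1:ℕ):ℝ)))
      + (-1:ℝ)^(0:ℕ) * (((M+1).choose 0 : ℕ) : ℝ)/(2*((k+1:ℕ):ℝ)+1-2*((0:ℕ):ℝ))
      = ∑ ℓ ∈ range (k+2), (-1:ℝ)^ℓ * ((M.choose ℓ : ℕ):ℝ) / (2*((k+1:ℕ):ℝ)+1-2*(ℓ:ℝ)) := by
    conv_rhs => rw [Finset.sum_range_succ']
    norm_num
  rw [add_assoc, h3]
  ring

lemma aa_diag (N : ℕ) :
    aa N N = (-1:ℝ)^N * 4^N * (N.factorial : ℝ)^2 / ((2*N+1).factorial : ℝ) := by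
  unfold aa
  rw [← Finset.sum_range_reflect]
  have h1 : ∀ ℓ ∈ range (N + 1),
      (-1:ℝ)^(N + 1 - 1 - ℓ) * ((N.choose (N + 1 - 1 - ℓ) : ℕ) : ℝ) /
        (2*(N:ℝ)+1-2*((N + 1 - 1 - ℓ : ℕ):ℝ))
      = (-1:ℝ)^N * ((-1:ℝ)^ℓ * ((N.choose ℓ : ℕ):ℝ) / (2*((0:ℕ):ℝ)+2*(ℓ:ℝ)+1)) := by
    intro ℓ hℓ
    have hle : ℓ ≤ N := Nat.lt_succ_iff.mp (Finset.mem_range.mp hℓ)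
    rw [show N + 1 - 1 - ℓ = N - ℓ from rfl, Nat.choose_symm hle]
    have hc : ((N - ℓ : ℕ) : ℝ) = (N:ℝ) - ℓ := by
      push_cast [Nat.cast_sub hle]; ring
    have hp : (-1:ℝ)^(N - ℓ) * (-1:ℝ)^ℓ = (-1:ℝ)^N := by
      rw [← pow_add, Nat.sub_add_cancel hle]
    have hp2 : (-1:ℝ)^(N - ℓ) = (-1:ℝ)^N * (-1:ℝ)^ℓ := by
      have : ((-1:ℝ)^ℓ) * ((-1:ℝ)^ℓ) = 1 := by
        rw [← pow_add]
        simp [pow_add, ← two_mul, pow_mul]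
      calc (-1:ℝ)^(N-ℓ) = (-1:ℝ)^(N-ℓ) * (((-1:ℝ)^ℓ) * ((-1:ℝ)^ℓ)) := by rw [this]; ring
        _ = (-1:ℝ)^N * (-1:ℝ)^ℓ := by rw [← mul_assoc, hp]
    rw [hp2, hc]
    push_cast
    ring
  rw [Finset.sum_congr rfl h1, ← Finset.mul_sum, pf N 0]
  norm_num [sq]
  ring

noncomputable def cc (M m : ℕ) : ℝ :=
  (-1 : ℝ) ^ m * ((M.choose m : ℝ) / ((2 * M).choose (2 * m) : ℝ))

lemma cc_step (N m : ℕ) (h : m ≤ N) :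
    cc (N + 1) m - cc (N + 1) (m + 1) = (2 * (N : ℝ) + 2) / (2 * (N : ℝ) + 1) * cc N m := by
  obtain ⟨t, rfl⟩ := Nat.exists_eq_add_of_le h
  unfold cc
  have c1 : (((m + t + 1).choose m : ℕ) : ℝ)
      = ((m + t + 1).factorial : ℝ) / (m.factorial * (t + 1).factorial) := by
    rw [Nat.cast_choose ℝ (by omega : m ≤ m + t + 1),
      show m + t + 1 - m = t + 1 from by omega]
  have c2 : (((2 * (m + t + 1)).choose (2 * m) : ℕ) : ℝ)
      = ((2 * m + 2 * t + 2).factorial : ℝ) / ((2 * m).factorial * (2 * t + 2).factorial) := by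
    rw [show 2 * (m + t + 1) = 2 * m + 2 * t + 2 by ring,
      Nat.cast_choose ℝ (by omega : 2 * m ≤ 2 * m + 2 * t + 2),
      show 2 * m + 2 * t + 2 - 2 * m = 2 * t + 2 from by omega]
  have c3 : (((m + t + 1).choose (m + 1) : ℕ) : ℝ)
      = ((m + t + 1).factorial : ℝ) / ((m + 1).factorial * t.factorial) := by
    rw [Nat.cast_choose ℝ (by omega : m + 1 ≤ m + t + 1),
      show m + t + 1 - (m + 1) = t from by omega]
  have c4 : (((2 * (m + t + 1)).choose (2 * (m + 1)) : ℕ) : ℝ)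
      = ((2 * m + 2 * t + 2).factorial : ℝ) / ((2 * m + 2).factorial * (2 * t).factorial) := by
    rw [show 2 * (m + t + 1) = 2 * m + 2 * t + 2 by ring,
      show 2 * (m + 1) = 2 * m + 2 by ring,
      Nat.cast_choose ℝ (by omega : 2 * m + 2 ≤ 2 * m + 2 * t + 2),
      show 2 * m + 2 * t + 2 - (2 * m + 2) = 2 * t from by omega]
  have c5 : (((m + t).choose m : ℕ) : ℝ)
      = ((m + t).factorial : ℝ) / (m.factorial * t.factorial) := by
    rw [Nat.cast_choose ℝ (by omega : m ≤ m + t),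
      show m + t - m = t from by omega]
  have c6 : (((2 * (m + t)).choose (2 * m) : ℕ) : ℝ)
      = ((2 * m + 2 * t).factorial : ℝ) / ((2 * m).factorial * (2 * t).factorial) := by
    rw [show 2 * (m + t) = 2 * m + 2 * t by ring,
      Nat.cast_choose ℝ (by omega : 2 * m ≤ 2 * m + 2 * t),
      show 2 * m + 2 * t - 2 * m = 2 * t from by omega]
  rw [c1, c2, c3, c4, c5, c6]
  have e1 : ((m + t + 1).factorial : ℝ) = ((m : ℝ) + t + 1) * (m + t).factorial := by
    rw [Nat.factorial_succ]; push_cast; ring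
  have e2 : ((t + 1).factorial : ℝ) = ((t : ℝ) + 1) * t.factorial := by
    rw [Nat.factorial_succ]; push_cast; ring
  have e3 : ((2 * m + 2 * t + 2).factorial : ℝ)
      = (2 * (m : ℝ) + 2 * t + 2) * (2 * (m : ℝ) + 2 * t + 1) * (2 * m + 2 * t).factorial := by
    rw [show 2 * m + 2 * t + 2 = ((2 * m + 2 * t) + 1) + 1 by ring,
      Nat.factorial_succ, Nat.factorial_succ]
    push_cast; ring
  have e4 : ((2 * t + 2).factorial : ℝ)
      = (2 * (t : ℝ) + 2) * (2 * (t : ℝ) + 1) * (2 * t).factorial := by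
    rw [show 2 * t + 2 = (2 * t + 1) + 1 by ring, Nat.factorial_succ, Nat.factorial_succ]
    push_cast; ring
  have e5 : ((m + 1).factorial : ℝ) = ((m : ℝ) + 1) * m.factorial := by
    rw [Nat.factorial_succ]; push_cast; ring
  have e6 : ((2 * m + 2).factorial : ℝ)
      = (2 * (m : ℝ) + 2) * (2 * (m : ℝ) + 1) * (2 * m).factorial := by
    rw [show 2 * m + 2 = (2 * m + 1) + 1 by ring, Nat.factorial_succ, Nat.factorial_succ]
    push_cast; ring
  rw [e1, e2, e3, e4, e5, e6]
  have n1 : (m.factorial : ℝ) ≠ 0 := Nat.cast_ne_zero.2 (Nat.factorial_ne_zero _)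
  have n2 : (t.factorial : ℝ) ≠ 0 := Nat.cast_ne_zero.2 (Nat.factorial_ne_zero _)
  have n3 : ((2 * m).factorial : ℝ) ≠ 0 := Nat.cast_ne_zero.2 (Nat.factorial_ne_zero _)
  have n4 : ((2 * t).factorial : ℝ) ≠ 0 := Nat.cast_ne_zero.2 (Nat.factorial_ne_zero _)
  have n5 : ((m + t).factorial : ℝ) ≠ 0 := Nat.cast_ne_zero.2 (Nat.factorial_ne_zero _)
  have n6 : ((2 * m + 2 * t).factorial : ℝ) ≠ 0 := Nat.cast_ne_zero.2 (Nat.factorial_ne_zero _)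
  have p1 : ((m : ℝ) + t + 1) ≠ 0 := by positivity
  have p2 : ((t : ℝ) + 1) ≠ 0 := by positivity
  have p3 : (2 * (m : ℝ) + 2 * t + 2) ≠ 0 := by positivity
  have p4 : (2 * (m : ℝ) + 2 * t + 1) ≠ 0 := by positivity
  have p5 : (2 * (t : ℝ) + 2) ≠ 0 := by positivity
  have p6 : (2 * (t : ℝ) + 1) ≠ 0 := by positivity
  have p7 : ((m : ℝ) + 1) ≠ 0 := by positivity
  have p8 : (2 * (m : ℝ) + 2) ≠ 0 := by positivity
  have p9 : (2 * (m : ℝ) + 1) ≠ 0 := by positivity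
  have p10 : (2 * ((m : ℝ) + t) + 1) ≠ 0 := by positivity
  push_cast
  field_simp
  ring

noncomputable def DD (M : ℕ) : ℝ := ∑ m ∈ Finset.range M, cc M m * aa M m

lemma cc_zero (M : ℕ) : cc M 0 = 1 := by simp [cc]

lemma cc_top (N : ℕ) : cc (N + 1) N = (-1 : ℝ) ^ N / (2 * (N : ℝ) + 1) := by
  unfold cc
  have h1 : (N + 1).choose N = N + 1 := Nat.choose_succ_self_right N
  have h2 : (((2 * (N + 1)).choose (2 * N) : ℕ) : ℝ)
      = ((N : ℝ) + 1) * (2 * (N : ℝ) + 1) := by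
    rw [show 2 * (N + 1) = 2 * N + 2 by ring,
      Nat.cast_choose ℝ (by omega : 2 * N ≤ 2 * N + 2),
      show 2 * N + 2 - 2 * N = 2 from by omega]
    rw [show (2 * N + 2).factorial = (2 * N + 2) * ((2 * N + 1) * (2 * N).factorial) from by
      rw [show 2 * N + 2 = (2 * N + 1) + 1 by ring, Nat.factorial_succ, Nat.factorial_succ]]
    have n3 : ((2 * N).factorial : ℝ) ≠ 0 := Nat.cast_ne_zero.2 (Nat.factorial_ne_zero _)
    push_cast
    rw [show (Nat.factorial 2 : ℝ) = 2 from by norm_num [Nat.factorial]]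
    field_simp
  rw [h1, h2]
  have : (2 * (N : ℝ) + 1) ≠ 0 := by positivity
  have : ((N : ℝ) + 1) ≠ 0 := by positivity
  push_cast
  field_simp

lemma DD_rec (N : ℕ) : DD (N + 1)
    = (2 * (N : ℝ) + 2) / (2 * (N : ℝ) + 1) * DD N
      + 4 ^ N * ((N.factorial : ℝ))^2 / ((2 * (N : ℝ) + 1) * ((2 * N + 1).factorial : ℝ)) := by
  unfold DD
  rw [Finset.sum_range_succ']
  have step1 : ∀ m ∈ range N, cc (N + 1) (m + 1) * aa (N + 1) (m + 1)
      = cc (N + 1) (m + 1) * aa N (m + 1) - cc (N + 1) (m + 1) * aa N m := by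
    intro m _
    rw [aa_rec]
    ring
  rw [Finset.sum_congr rfl step1, Finset.sum_sub_distrib]
  have hA : (∑ m ∈ range N, cc (N + 1) (m + 1) * aa N (m + 1)) + cc (N + 1) 0 * aa N 0
      = (∑ j ∈ range N, cc (N + 1) j * aa N j) + cc (N + 1) N * aa N N := by
    rw [← Finset.sum_range_succ' (fun j => cc (N + 1) j * aa N j) N, Finset.sum_range_succ]
  have key : (∑ m ∈ range N, (cc (N + 1) m - cc (N + 1) (m + 1)) * aa N m)
      = (2 * (N : ℝ) + 2) / (2 * (N : ℝ) + 1) * ∑ m ∈ range N, cc N m * aa N m := by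
    rw [Finset.mul_sum]
    refine Finset.sum_congr rfl fun m hm => ?_
    rw [cc_step N m (le_of_lt (Finset.mem_range.mp hm))]
    push_cast
    ring
  have bdry : cc (N + 1) N * aa N N
      = 4 ^ N * ((N.factorial : ℝ))^2 / ((2 * (N : ℝ) + 1) * ((2 * N + 1).factorial : ℝ)) := by
    rw [cc_top, aa_diag]
    have hsq : (-1 : ℝ) ^ N * (-1 : ℝ) ^ N = 1 := by
      rw [← pow_add, ← two_mul, pow_mul]
      norm_num
    have n1 : ((2 * N + 1).factorial : ℝ) ≠ 0 := Nat.cast_ne_zero.2 (Nat.factorial_ne_zero _)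
    have n2 : (2 * (N : ℝ) + 1) ≠ 0 := by positivity
    field_simp
    push_cast
    linear_combination hsq
  calc (∑ m ∈ range N, cc (N + 1) (m + 1) * aa N (m + 1))
        - (∑ m ∈ range N, cc (N + 1) (m + 1) * aa N m) + cc (N + 1) 0 * aa (N + 1) 0
      = ((∑ m ∈ range N, cc (N + 1) (m + 1) * aa N (m + 1)) + cc (N + 1) 0 * aa N 0)
        - (∑ m ∈ range N, cc (N + 1) (m + 1) * aa N m) := by
        rw [aa_zero, aa_zero]; ring
    _ = (∑ m ∈ range N, (cc (N + 1) m - cc (N + 1) (m + 1)) * aa N m)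
        + cc (N + 1) N * aa N N := by
        rw [hA, show (∑ m ∈ range N, (cc (N + 1) m - cc (N + 1) (m + 1)) * aa N m)
            = (∑ m ∈ range N, (cc (N + 1) m * aa N m - cc (N + 1) (m + 1) * aa N m)) from
          Finset.sum_congr rfl fun m _ => by ring, Finset.sum_sub_distrib]
        ring
    _ = (2 * (N : ℝ) + 2) / (2 * (N : ℝ) + 1) * ∑ m ∈ range N, cc N m * aa N m
        + 4 ^ N * ((N.factorial : ℝ))^2 / ((2 * (N : ℝ) + 1) * ((2 * N + 1).factorial : ℝ)) := by
        rw [key, bdry]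

noncomputable def HH (n : ℕ) : ℝ := ∑ i ∈ Finset.range n, 1 / ((i : ℝ) + 1)

lemma TT_eq (M : ℕ) :
    ∑ k ∈ Finset.Icc 1 M, (1 : ℝ) / ((M : ℝ) + (k : ℝ)) = HH (2 * M) - HH M := by
  rw [show 2 * M = M + M by ring, HH, HH, Finset.sum_range_add]
  rw [show Finset.Icc 1 M = Finset.Ico 1 (M + 1) from rfl, Finset.sum_Ico_eq_sum_range]
  rw [show M + 1 - 1 = M from rfl]
  have : ∀ i ∈ range M, (1 : ℝ) / ((M : ℝ) + ((1 + i : ℕ) : ℝ))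
      = 1 / (((M + i : ℕ) : ℝ) + 1) := by
    intro i _
    push_cast
    ring_nf
  rw [Finset.sum_congr rfl this]
  ring

lemma main_ind (M : ℕ) (hM : 1 ≤ M) :
    ((2 * M).choose M : ℝ) / 2 ^ (2 * M - 1) * DD M
      = 2 * (HH (2 * M) - HH M) := by
  induction M, hM using Nat.le_induction with
  | base =>
    rw [show (2 : ℕ) * 1 = 2 from rfl]
    rw [DD, Finset.sum_range_one, cc_zero, aa_zero, HH, HH]
    norm_num [Finset.sum_range_succ]
  | succ M hM ih =>
    have hC : ((2 * M).choose M : ℝ) ≠ 0 :=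
      Nat.cast_ne_zero.2 (Nat.choose_pos (by omega : M ≤ 2 * M)).ne'
    have hDD : DD M = 2 ^ (2 * M - 1) * (2 * (HH (2 * M) - HH M)) / ((2 * M).choose M : ℝ) := by
      have h2 : (2 : ℝ) ^ (2 * M - 1) ≠ 0 := by positivity
      field_simp at ih ⊢
      linarith [ih]
    -- central binomial recurrence
    have hcb : ((2 * (M + 1)).choose (M + 1) : ℝ)
        = 2 * (2 * (M : ℝ) + 1) * ((2 * M).choose M : ℝ) / ((M : ℝ) + 1) := by
      have h := Nat.succ_mul_centralBinom_succ M
      have h' : (M + 1) * ((2 * (M + 1)).choose (M + 1)) = 2 * (2 * M + 1) * ((2 * M).choose M) := by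
        simpa [Nat.centralBinom] using h
      have := congrArg (fun n : ℕ => (n : ℝ)) h'
      push_cast at this
      have hM1 : ((M : ℝ) + 1) ≠ 0 := by positivity
      field_simp
      linarith [this]
    rw [DD_rec, hcb, hDD]
    -- harmonic recurrences
    have hH2 : HH (2 * (M + 1)) = HH (2 * M) + 1 / (2 * (M : ℝ) + 1) + 1 / (2 * (M : ℝ) + 2) := by
      rw [show 2 * (M + 1) = (2 * M + 1) + 1 by ring, HH, HH,
        Finset.sum_range_succ, Finset.sum_range_succ]
      push_cast
      ring
    have hH1 : HH (M + 1) = HH M + 1 / ((M : ℝ) + 1) := by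
      rw [HH, HH, Finset.sum_range_succ]
    rw [hH2, hH1]
    -- powers of two
    have hp1 : (2 : ℝ) ^ (2 * (M + 1) - 1) = 4 * 2 ^ (2 * M - 1) := by
      rw [show 2 * (M + 1) - 1 = (2 * M - 1) + 2 by omega, pow_add]
      ring
    have hp2 : (4 : ℝ) ^ M = 2 * 2 ^ (2 * M - 1) := by
      rw [show (4 : ℝ) = 2 ^ 2 by norm_num, ← pow_mul,
        show 2 * M = 1 + (2 * M - 1) from by omega, pow_add, pow_one,
        show 1 + (2 * M - 1) - 1 = 2 * M - 1 from by omega]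
    rw [hp1, hp2]
    -- binomial/factorial closed form
    have hCf : ((2 * M).choose M : ℝ) = ((2 * M).factorial : ℝ) / ((M.factorial : ℝ) * (M.factorial : ℝ)) := by
      rw [Nat.cast_choose ℝ (by omega : M ≤ 2 * M), show 2 * M - M = M from by omega]
    have hfact : ((2 * M + 1).factorial : ℝ) = (2 * (M : ℝ) + 1) * ((2 * M).factorial : ℝ) := by
      rw [Nat.factorial_succ]
      push_cast
      ring
    rw [hCf, hfact]
    have n1 : ((2 * M).factorial : ℝ) ≠ 0 := Nat.cast_ne_zero.2 (Nat.factorial_ne_zero _)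
    have n2 : ((M).factorial : ℝ) ≠ 0 := Nat.cast_ne_zero.2 (Nat.factorial_ne_zero _)
    have n3 : (2 * (M : ℝ) + 1) ≠ 0 := by positivity
    have n4 : ((M : ℝ) + 1) ≠ 0 := by positivity
    have n5 : (2 : ℝ) ^ (2 * M - 1) ≠ 0 := by positivity
    have n6 : (2 * (M : ℝ) + 2) ≠ 0 := by positivity
    field_simp
    ring

/-- `S(M) = T(M)`: for all `M ≥ 1`,
`2^{1-2M} C(2M,M) ∑_{m=0}^{M-1} (-1)^m (C(M,m)/C(2M,2m)) ∑_{ℓ=0}^m (-1)^ℓ C(M,ℓ)/(2m+1-2ℓ)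
  = 2 ∑_{k=1}^M 1/(M+k)`. -/
theorem S_eq_T (M : ℕ) (hM : 1 ≤ M) :
    ((2 * M).choose M : ℝ) / 2 ^ (2 * M - 1) *
      ∑ m ∈ Finset.range M,
        (-1 : ℝ) ^ m * ((M.choose m : ℝ) / ((2 * M).choose (2 * m) : ℝ)) *
          ∑ ℓ ∈ Finset.range (m + 1),
            (-1 : ℝ) ^ ℓ * (M.choose ℓ : ℝ) / (2 * (m : ℝ) + 1 - 2 * (ℓ : ℝ))
    = 2 * ∑ k ∈ Finset.Icc 1 M, (1 : ℝ) / ((M : ℝ) + (k : ℝ)) := by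
  have h := main_ind M hM
  rw [TT_eq M]
  exact h
end

section
/- For every integer M ≥ 0, X(M, M+1) = (-1)^{M+1} · (1 - 2^{2M+1}/C(2M+1, M+1)); that is, ∑_{ℓ=0}^{M} (-1)^ℓ · C(M+1, ℓ)/(2M + 1 - 2ℓ) = (-1)^{M+1} · (1 - 2^{2M+1}/C(2M+1, M+1)). -/
lemma pascal_split (n : ℕ) (g : ℕ → ℝ) :
    ∑ ℓ ∈ Finset.range (n+2), (-1:ℝ)^ℓ * ((n+1).choose ℓ : ℝ) * g ℓ =
      ∑ ℓ ∈ Finset.range (n+1), (-1:ℝ)^ℓ * (n.choose ℓ : ℝ) * g ℓ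
      - ∑ ℓ ∈ Finset.range (n+1), (-1:ℝ)^ℓ * (n.choose ℓ : ℝ) * g (ℓ+1) := by
  rw [Finset.sum_range_succ' (fun ℓ => (-1:ℝ)^ℓ * ((n+1).choose ℓ : ℝ) * g ℓ) (n+1)]
  have h1 : ∀ i ∈ Finset.range (n+1),
      (-1:ℝ)^(i+1) * ((n+1).choose (i+1) : ℝ) * g (i+1)
        = (-1)^(i+1) * (n.choose (i+1) : ℝ) * g (i+1)
          + (-((-1:ℝ)^i * (n.choose i : ℝ) * g (i+1))) := by
    intro i _
    rw [Nat.choose_succ_succ' n i]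
    push_cast
    ring
  rw [Finset.sum_congr rfl h1, Finset.sum_add_distrib, Finset.sum_neg_distrib]
  have h2 : ∑ i ∈ Finset.range (n+1), (-1:ℝ)^(i+1) * (n.choose (i+1) : ℝ) * g (i+1)
      = ∑ i ∈ Finset.range n, (-1:ℝ)^(i+1) * (n.choose (i+1) : ℝ) * g (i+1) := by
    rw [Finset.sum_range_succ]
    simp [Nat.choose_succ_self]
  rw [h2, Finset.sum_range_succ' (fun ℓ => (-1:ℝ)^ℓ * (n.choose ℓ : ℝ) * g ℓ) n]
  simp
  ring

lemma part_frac : ∀ (n : ℕ) (x : ℝ), 0 < x →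
    ∑ ℓ ∈ Finset.range (n+1), (-1:ℝ)^ℓ * (n.choose ℓ : ℝ) * (1 / (x + ℓ)) =
      (n.factorial : ℝ) / ∏ j ∈ Finset.range (n+1), (x + (j:ℝ)) := by
  intro n
  induction n with
  | zero => intro x hx; simp
  | succ n ih =>
    intro x hx
    have hx1 : (0:ℝ) < x + 1 := by linarith
    have key := pascal_split n (fun ℓ => 1 / (x + (ℓ:ℝ)))
    have h2 : ∑ ℓ ∈ Finset.range (n+1), (-1:ℝ)^ℓ * (n.choose ℓ : ℝ) * (1 / (x + ((ℓ:ℝ)+1)))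
        = ∑ ℓ ∈ Finset.range (n+1), (-1:ℝ)^ℓ * (n.choose ℓ : ℝ) * (1 / ((x+1) + (ℓ:ℝ))) := by
      apply Finset.sum_congr rfl; intro i _; ring_nf
    rw [key]
    push_cast
    rw [h2, ih x hx, ih (x+1) hx1]
    have hprod : ∏ j ∈ Finset.range (n+2), (x + (j:ℝ))
        = x * ∏ j ∈ Finset.range (n+1), ((x+1) + (j:ℝ)) := by
      rw [Finset.prod_range_succ' (fun j => x + (j:ℝ)) (n+1), mul_comm]
      congr 1
      · norm_num
      · exact Finset.prod_congr rfl fun i _ => by push_cast; ring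
    have hprod2 : ∏ j ∈ Finset.range (n+2), (x + (j:ℝ))
        = (∏ j ∈ Finset.range (n+1), (x + (j:ℝ))) * (x + ((n:ℝ)+1)) := by
      rw [Finset.prod_range_succ]; push_cast; ring
    have hP : (0:ℝ) < ∏ j ∈ Finset.range (n+1), (x + (j:ℝ)) := by
      apply Finset.prod_pos; intro i _; positivity
    have hrel : x * ∏ j ∈ Finset.range (n+1), ((x+1) + (j:ℝ))
        = (∏ j ∈ Finset.range (n+1), (x + (j:ℝ))) * (x + ((n:ℝ)+1)) :=
      hprod.symm.trans hprod2
    have hP1eq : ∏ j ∈ Finset.range (n+1), ((x+1) + (j:ℝ))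
        = (∏ j ∈ Finset.range (n+1), (x + (j:ℝ))) * (x + ((n:ℝ)+1)) / x := by
      rw [eq_div_iff hx.ne']; linear_combination hrel
    rw [hprod2, hP1eq, Nat.factorial_succ]
    push_cast
    have hxn : (0:ℝ) < x + ((n:ℝ)+1) := by positivity
    field_simp
    ring

lemma pascal_split' (n : ℕ) (g : ℕ → ℝ) :
    ∑ ℓ ∈ Finset.range (n+2), (-1:ℝ)^ℓ * ((n+2).choose ℓ : ℝ) * g ℓ =
      ∑ ℓ ∈ Finset.range (n+2), (-1:ℝ)^ℓ * ((n+1).choose ℓ : ℝ) * g ℓ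
      - ∑ ℓ ∈ Finset.range (n+1), (-1:ℝ)^ℓ * ((n+1).choose ℓ : ℝ) * g (ℓ+1) := by
  rw [Finset.sum_range_succ' (fun ℓ => (-1:ℝ)^ℓ * ((n+2).choose ℓ : ℝ) * g ℓ) (n+1)]
  have h1 : ∀ i ∈ Finset.range (n+1),
      (-1:ℝ)^(i+1) * ((n+2).choose (i+1) : ℝ) * g (i+1)
        = (-1)^(i+1) * ((n+1).choose (i+1) : ℝ) * g (i+1)
          + (-((-1:ℝ)^i * ((n+1).choose i : ℝ) * g (i+1))) := by
    intro i _
    rw [Nat.choose_succ_succ' (n+1) i]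
    push_cast
    ring
  rw [Finset.sum_congr rfl h1, Finset.sum_add_distrib, Finset.sum_neg_distrib,
    Finset.sum_range_succ' (fun ℓ => (-1:ℝ)^ℓ * ((n+1).choose ℓ : ℝ) * g ℓ) (n+1)]
  simp
  ring

lemma prod_odd (n : ℕ) :
    (∏ j ∈ Finset.range (n+1), (2*j+1)) * (2^n * n.factorial) = (2*n+1).factorial := by
  induction n with
  | zero => simp
  | succ n ih =>
    have e : 2*(n+1)+1 = (2*n+1)+1+1 := by ring
    have f2 : ((2*n+1)+1+1).factorial = ((2*n+1)+1+1) * (((2*n+1)+1) * (2*n+1).factorial) := by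
      rw [Nat.factorial_succ, Nat.factorial_succ]
    rw [Finset.prod_range_succ, e, f2, ← ih, Nat.factorial_succ]
    ring

lemma wallis_sum (n : ℕ) :
    ∑ ℓ ∈ Finset.range (n+1), (-1:ℝ)^ℓ * (n.choose ℓ : ℝ) * (1 / (2*(n:ℝ)+1-2*(ℓ:ℝ)))
      = (-1:ℝ)^n * (4^n / ((2*(n:ℝ)+1) * ((2*n).choose n : ℝ))) := by
  rw [← Finset.sum_range_reflect]
  have h1 : ∀ j ∈ Finset.range (n+1),
      (-1:ℝ)^(n+1-1-j) * ((n.choose (n+1-1-j)) : ℝ) * (1 / (2*(n:ℝ)+1-2*((n+1-1-j : ℕ):ℝ)))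
        = (-1:ℝ)^n * ((-1:ℝ)^j * (n.choose j : ℝ) * (1/2) * (1 / ((1/2:ℝ) + (j:ℝ)))) := by
    intro j hj
    have hjn : j ≤ n := by simpa using Nat.lt_succ_iff.mp (Finset.mem_range.mp hj)
    have e1 : n + 1 - 1 - j = n - j := by omega
    have e2 : ((n - j : ℕ):ℝ) = (n:ℝ) - (j:ℝ) := by push_cast [Nat.cast_sub hjn]; ring
    have e3 : n.choose (n - j) = n.choose j := Nat.choose_symm hjn
    have e4 : (-1:ℝ)^(n-j) = (-1:ℝ)^n * (-1:ℝ)^j := by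
      have ha : (-1:ℝ)^(n-j) * (-1)^j = (-1)^n := by
        rw [← pow_add, Nat.sub_add_cancel hjn]
      have hb : (-1:ℝ)^j * (-1)^j = 1 := by
        rw [← pow_add, ← two_mul, pow_mul]; norm_num
      calc (-1:ℝ)^(n-j) = (-1:ℝ)^(n-j) * ((-1:ℝ)^j * (-1:ℝ)^j) := by rw [hb, mul_one]
        _ = ((-1:ℝ)^(n-j) * (-1:ℝ)^j) * (-1:ℝ)^j := by ring
        _ = (-1:ℝ)^n * (-1:ℝ)^j := by rw [ha]
    rw [e1, e2, e3, e4]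
    have hd : 2*(n:ℝ)+1-2*((n:ℝ)-(j:ℝ)) = 2*((1/2:ℝ) + (j:ℝ)) := by ring
    rw [hd]
    have hpos : (0:ℝ) < (1/2:ℝ) + (j:ℝ) := by positivity
    field_simp
  rw [Finset.sum_congr rfl h1, ← Finset.mul_sum]
  have h2 : ∑ j ∈ Finset.range (n+1), ((-1:ℝ)^j * (n.choose j : ℝ) * (1/2) * (1 / ((1/2:ℝ) + (j:ℝ))))
      = (1/2) * ∑ j ∈ Finset.range (n+1), ((-1:ℝ)^j * (n.choose j : ℝ) * (1 / ((1/2:ℝ) + (j:ℝ)))) := by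
    rw [Finset.mul_sum]; exact Finset.sum_congr rfl fun i _ => by ring
  rw [h2, part_frac n (1/2) (by norm_num)]
  have hprodhalf : ∏ j ∈ Finset.range (n+1), ((1/2:ℝ) + (j:ℝ))
      = ((∏ j ∈ Finset.range (n+1), (2*j+1) : ℕ) : ℝ) / 2^(n+1) := by
    push_cast
    rw [eq_div_iff (by positivity : (2:ℝ)^(n+1) ≠ 0)]
    have hc : (2:ℝ)^(n+1) = ∏ _j ∈ Finset.range (n+1), (2:ℝ) := by
      rw [Finset.prod_const, Finset.card_range]
    rw [hc, ← Finset.prod_mul_distrib]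
    exact Finset.prod_congr rfl fun i _ => by ring
  rw [hprodhalf]
  congr 1
  -- arithmetic finale
  have hfac : ((∏ j ∈ Finset.range (n+1), (2*j+1) : ℕ) : ℝ) * (2^n * (n.factorial : ℝ))
      = (2*(n:ℝ)+1) * ((2*n).choose n : ℝ) * (n.factorial : ℝ) * (n.factorial : ℝ) := by
    have h1 := prod_odd n
    have h2 : (2*n).choose n * n.factorial * n.factorial = (2*n).factorial := by
      have := Nat.choose_mul_factorial_mul_factorial (Nat.le_mul_of_pos_left n (by norm_num) : n ≤ 2*n)
      simpa [Nat.two_mul, Nat.add_sub_cancel] using this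
    have h3 : (2*n+1).factorial = (2*n+1) * (2*n).factorial := Nat.factorial_succ _
    have key : (∏ j ∈ Finset.range (n+1), (2*j+1)) * (2^n * n.factorial)
        = (2*n+1) * (2*n).choose n * n.factorial * n.factorial := by
      rw [h1, h3, ← h2]; ring
    exact_mod_cast key
  have hPpos : (0:ℝ) < ((∏ j ∈ Finset.range (n+1), (2*j+1) : ℕ) : ℝ) := by
    have : 0 < ∏ j ∈ Finset.range (n+1), (2*j+1) := Finset.prod_pos fun i _ => by omega
    exact_mod_cast this
  have hcpos : (0:ℝ) < ((2*n).choose n : ℝ) := by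
    exact_mod_cast Nat.choose_pos (Nat.le_mul_of_pos_left n (by norm_num))
  have hfpos : (0:ℝ) < (n.factorial : ℝ) := by exact_mod_cast n.factorial_pos
  have h2n1 : (0:ℝ) < 2*(n:ℝ)+1 := by positivity
  have hPval : ((∏ j ∈ Finset.range (n+1), (2*j+1) : ℕ) : ℝ) * 2^n
      = (2*(n:ℝ)+1) * ((2*n).choose n : ℝ) * (n.factorial : ℝ) :=
    mul_right_cancel₀ hfpos.ne' (by linear_combination hfac)
  rw [show (4:ℝ) = 2^2 by norm_num, ← pow_mul]
  push_cast at hPval ⊢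
  field_simp
  linear_combination (-(2:ℝ)*2^n) * hPval

/-- `X(M, M+1) = (-1)^{M+1} (1 - 2^{2M+1}/C(2M+1, M+1))`: for every `M ≥ 0`,
`∑_{ℓ=0}^M (-1)^ℓ C(M+1, ℓ)/(2M+1-2ℓ) = (-1)^{M+1} (1 - 2^{2M+1}/C(2M+1, M+1))`. -/
theorem X_at_M_succ (M : ℕ) :
    ∑ ℓ ∈ Finset.range (M + 1),
        (-1 : ℝ) ^ ℓ * ((M + 1).choose ℓ : ℝ) / (2 * (M : ℝ) + 1 - 2 * (ℓ : ℝ))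
      = (-1 : ℝ) ^ (M + 1) * (1 - 2 ^ (2 * M + 1) / ((2 * M + 1).choose (M + 1) : ℝ)) := by
  induction M with
  | zero => norm_num
  | succ M ih =>
    -- rewrite the sum in "mul (1/d)" form and with cleaned casts
    have hstep : ∑ ℓ ∈ Finset.range (M + 2),
          (-1:ℝ)^ℓ * ((M + 2).choose ℓ : ℝ) / (2 * ((M:ℝ)+1) + 1 - 2 * (ℓ:ℝ))
        = ∑ ℓ ∈ Finset.range (M + 2),
          (-1:ℝ)^ℓ * ((M + 2).choose ℓ : ℝ) * (1 / (2*(M:ℝ)+3 - 2*(ℓ:ℝ))) := by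
      apply Finset.sum_congr rfl; intro i _
      rw [mul_one_div]
      congr 1
      ring
    have hcast : ∑ ℓ ∈ Finset.range (M + 1 + 1),
          (-1:ℝ)^ℓ * ((M + 1 + 1).choose ℓ : ℝ) / (2 * ((M+1:ℕ):ℝ) + 1 - 2 * (ℓ:ℝ))
        = ∑ ℓ ∈ Finset.range (M + 2),
          (-1:ℝ)^ℓ * ((M + 2).choose ℓ : ℝ) / (2 * ((M:ℝ)+1) + 1 - 2 * (ℓ:ℝ)) := by
      apply Finset.sum_congr rfl; intro i _; push_cast; ring
    rw [hcast, hstep, pascal_split' M (fun ℓ => 1 / (2*(M:ℝ)+3 - 2*(ℓ:ℝ)))]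
    have hW : ∑ ℓ ∈ Finset.range (M+2),
          (-1:ℝ)^ℓ * ((M+1).choose ℓ : ℝ) * (1 / (2*(M:ℝ)+3 - 2*(ℓ:ℝ)))
        = (-1:ℝ)^(M+1) * (4^(M+1) / ((2*(M:ℝ)+3) * ((2*(M+1)).choose (M+1) : ℝ))) := by
      have := wallis_sum (M+1)
      have he : ∑ ℓ ∈ Finset.range (M+2),
            (-1:ℝ)^ℓ * ((M+1).choose ℓ : ℝ) * (1 / (2*((M+1:ℕ):ℝ)+1-2*(ℓ:ℝ)))
          = ∑ ℓ ∈ Finset.range (M+2),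
            (-1:ℝ)^ℓ * ((M+1).choose ℓ : ℝ) * (1 / (2*(M:ℝ)+3 - 2*(ℓ:ℝ))) := by
        apply Finset.sum_congr rfl; intro i _; push_cast; ring
      rw [← he, this]
      push_cast
      ring
    have hS : ∑ ℓ ∈ Finset.range (M+1),
          (-1:ℝ)^ℓ * ((M+1).choose ℓ : ℝ) * (1 / (2*(M:ℝ)+3 - 2*((ℓ+1 : ℕ):ℝ)))
        = (-1:ℝ)^(M+1) * (1 - 2 ^ (2*M+1) / ((2*M+1).choose (M+1) : ℝ)) := by
      rw [← ih]
      apply Finset.sum_congr rfl; intro i _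
      rw [mul_one_div]
      congr 1
      push_cast
      ring
    rw [hW, hS]
    -- binomial coefficient relations
    have hsym : (2*M+1).choose M = (2*M+1).choose (M+1) := by
      rw [← Nat.choose_symm (by omega : M+1 ≤ 2*M+1)]
      congr 1
      omega
    have hc2 : (2*(M+1)).choose (M+1) = 2 * (2*M+1).choose (M+1) := by
      have e : 2*(M+1) = (2*M+1)+1 := by ring
      rw [e, Nat.choose_succ_succ (2*M+1) M, hsym]
      ring
    have hc3 : (M+2) * ((2*(M+1)+1).choose (M+1+1)) = (2*M+3) * ((2*(M+1)).choose (M+1)) := by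
      have h := Nat.add_one_mul_choose_eq (2*(M+1)) (M+1)
      calc (M+2) * ((2*(M+1)+1).choose (M+1+1))
          = (2*(M+1)+1).choose (M+1+1) * (M+1+1) := by ring
        _ = (2*(M+1)+1) * (2*(M+1)).choose (M+1) := h.symm
        _ = (2*M+3) * ((2*(M+1)).choose (M+1)) := by ring
    have hc1pos : (0:ℝ) < ((2*M+1).choose (M+1) : ℝ) := by
      exact_mod_cast Nat.choose_pos (by omega : M+1 ≤ 2*M+1)
    have hc3pos : (0:ℝ) < ((2*(M+1)+1).choose (M+1+1) : ℝ) := by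
      exact_mod_cast Nat.choose_pos (by omega : M+1+1 ≤ 2*(M+1)+1)
    have hc2R : ((2*(M+1)).choose (M+1) : ℝ) = 2 * ((2*M+1).choose (M+1) : ℝ) := by
      exact_mod_cast hc2
    have hc3R : ((M:ℝ)+2) * ((2*(M+1)+1).choose (M+1+1) : ℝ)
        = (2*(M:ℝ)+3) * ((2*(M+1)).choose (M+1) : ℝ) := by
      exact_mod_cast hc3
    have hc3val : ((2*(M+1)+1).choose (M+1+1) : ℝ)
        = 2 * (2*(M:ℝ)+3) * ((2*M+1).choose (M+1) : ℝ) / ((M:ℝ)+2) := by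
      rw [eq_div_iff (by positivity : ((M:ℝ)+2) ≠ 0)]
      linear_combination hc3R + (2*(M:ℝ)+3) * hc2R
    have key : (4:ℝ)^(M+1) / ((2*(M:ℝ)+3) * ((2*(M+1)).choose (M+1) : ℝ))
          - (1 - 2 ^ (2*M+1) / ((2*M+1).choose (M+1) : ℝ))
        = -(1 - 2 ^ (2*(M+1)+1) / ((2*(M+1)+1).choose (M+1+1) : ℝ)) := by
      rw [hc2R, hc3val, show (4:ℝ) = 2^2 by norm_num, ← pow_mul]
      have hM2 : ((M:ℝ)+2) ≠ 0 := by positivity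
      field_simp
      ring
    rw [pow_succ]
    linear_combination ((-1:ℝ)^(M+1)) * key
end

section
/- Let N be an even positive integer and n an odd positive integer with n ≤ N. Then ∑_{v=0}^{n} ∑_{s=N/2+1-v}^{N-v} (-1)^v · C(n,v) · C(N-n, s) = (-1)^{(n+1)/2} · T((N-n-1)/2, (n-1)/2). -/
noncomputable def chooseZ (a : ℕ) (b : ℤ) : ℝ :=
  if 0 ≤ b then (a.choose b.toNat : ℝ) else 0

noncomputable def Tcat (p q : ℕ) : ℝ :=
  (((2 * p + 1).factorial : ℝ) * ((2 * q).factorial : ℝ)) /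
    ((p.factorial : ℝ) * (q.factorial : ℝ) * ((p + q + 1).factorial : ℝ))

open Polynomial Finset

lemma coeffB (m k : ℕ) : ((1 + X : ℝ[X]) ^ m).coeff k = (m.choose k : ℝ) :=
  coeff_one_add_X_pow ℝ m k

lemma coeffA (m k : ℕ) : ((1 - X : ℝ[X]) ^ m).coeff k = (-1)^k * (m.choose k : ℝ) := by
  have h : (1 - X : ℝ[X]) = C (-1) * (X + C (-1)) := by
    simp [mul_add]; ring
  rw [h, mul_pow, ← C_pow, coeff_C_mul, coeff_X_add_C_pow]
  rcases le_or_gt k m with hk | hk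
  · have h2 : (-1:ℝ)^(m-k) * (-1:ℝ)^k = (-1)^m := by
      rw [← pow_add]; congr 1; omega
    have h3 : ((-1:ℝ)^(m-k))^2 = 1 := by
      rw [← pow_mul, mul_comm, pow_mul, neg_one_sq, one_pow]
    calc ((-1:ℝ))^m * ((-1:ℝ)^(m-k) * (m.choose k : ℝ))
        = ((-1:ℝ)^(m-k))^2 * ((-1:ℝ)^k * (m.choose k : ℝ)) := by rw [← h2]; ring
      _ = (-1:ℝ)^k * (m.choose k : ℝ) := by rw [h3]; ring
  · simp [Nat.choose_eq_zero_of_lt hk]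

lemma Tcat_zero (p : ℕ) : Tcat p 0 = ((2*p+1).choose p : ℝ) := by
  have h := Nat.choose_mul_factorial_mul_factorial (show p ≤ 2*p+1 by omega)
  have h2 : 2*p+1-p = p+1 := by omega
  rw [h2] at h
  have hc : (((2*p+1).choose p : ℝ)) * (p.factorial : ℝ) * ((p+1).factorial : ℝ)
      = ((2*p+1).factorial : ℝ) := by exact_mod_cast congrArg (Nat.cast (R := ℝ)) h
  unfold Tcat
  rw [show 2*0 = 0 from rfl, show p + 0 + 1 = p + 1 from rfl, Nat.factorial_zero]
  rw [div_eq_iff (by positivity)]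
  push_cast
  nlinarith [hc]

lemma Tcat_rec (p q : ℕ) : Tcat p (q+1) + Tcat (p+1) q = 4 * Tcat p q := by
  have e1 : ((2*(q+1)).factorial : ℝ) = (2*q+2)*(2*q+1)*((2*q).factorial : ℝ) := by
    rw [show 2*(q+1) = (2*q+1)+1 from by ring, Nat.factorial_succ,
      show 2*q+1 = (2*q)+1 from rfl, Nat.factorial_succ]
    push_cast; ring
  have e2 : (((q+1)).factorial : ℝ) = (q+1)*(q.factorial : ℝ) := by
    rw [Nat.factorial_succ]; push_cast; ring
  have e3 : ((p+(q+1)+1).factorial : ℝ) = (p+q+2)*((p+q+1).factorial : ℝ) := by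
    rw [show p+(q+1)+1 = (p+q+1)+1 from by ring, Nat.factorial_succ]; push_cast; ring
  have e4 : ((2*(p+1)+1).factorial : ℝ) = (2*p+3)*(2*p+2)*((2*p+1).factorial : ℝ) := by
    rw [show 2*(p+1)+1 = ((2*p+1)+1)+1 from by ring, Nat.factorial_succ, Nat.factorial_succ]
    push_cast; ring
  have e5 : (((p+1)).factorial : ℝ) = (p+1)*(p.factorial : ℝ) := by
    rw [Nat.factorial_succ]; push_cast; ring
  have e6 : (((p+1)+q+1).factorial : ℝ) = (p+q+2)*((p+q+1).factorial : ℝ) := by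
    rw [show (p+1)+q+1 = (p+q+1)+1 from by ring, Nat.factorial_succ]; push_cast; ring
  unfold Tcat
  rw [e1, e2, e3, e4, e5, e6]
  have f1 : (p.factorial : ℝ) ≠ 0 := by positivity
  have f2 : (q.factorial : ℝ) ≠ 0 := by positivity
  have f3 : ((p+q+1).factorial : ℝ) ≠ 0 := by positivity
  have f4 : ((q:ℝ)+1) ≠ 0 := by positivity
  have f5 : ((p:ℝ)+1) ≠ 0 := by positivity
  have f6 : ((p:ℝ)+(q:ℝ)+2) ≠ 0 := by positivity
  field_simp
  ring

lemma keyA : ∀ (q p : ℕ), (((1 - X)^(2*q) * (1 + X)^(2*p+1) : ℝ[X])).coeff (p+q+1)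
    = (-1)^q * Tcat p q := by
  intro q
  induction q with
  | zero =>
    intro p
    rw [show 2*0 = 0 from rfl, pow_zero, one_mul, coeffB, Tcat_zero]
    have : (2*p+1).choose (p+1) = (2*p+1).choose p := by
      rw [← Nat.choose_symm (show p+1 ≤ 2*p+1 by omega), show 2*p+1-(p+1) = p from by omega]
    rw [show p+0+1 = p+1 from rfl, this]
    simp
  | succ q ih =>
    intro p
    have c4 : (C (4:ℝ) : ℝ[X]) = 4 := by
      rw [show (4:ℝ) = ((4:ℕ):ℝ) by norm_num, Polynomial.C_eq_natCast]; norm_num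
    have poly : ((1 - X)^(2*q) * (1 + X)^(2*(p+1)+1) : ℝ[X])
        = (1 - X)^(2*(q+1)) * (1 + X)^(2*p+1)
          + X * (C 4 * ((1 - X)^(2*q) * (1 + X)^(2*p+1))) := by
      rw [c4, show 2*(p+1)+1 = (2*p+1)+2 from by ring, show 2*(q+1) = 2*q+2 from by ring,
        pow_add, pow_add]
      ring
    have hco := congrArg (fun f : ℝ[X] => f.coeff (p+q+2)) poly
    simp only [coeff_add] at hco
    rw [show p+q+2 = (p+q+1)+1 from rfl, coeff_X_mul, coeff_C_mul] at hco
    have h1 : (((1 - X)^(2*q) * (1 + X)^(2*(p+1)+1) : ℝ[X])).coeff ((p+q+1)+1)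
        = (-1)^q * Tcat (p+1) q := by
      rw [show (p+q+1)+1 = (p+1)+q+1 from by ring]; exact ih (p+1)
    rw [h1, ih p] at hco
    have goal_eq : (((1 - X)^(2*(q+1)) * (1 + X)^(2*p+1) : ℝ[X])).coeff (p+(q+1)+1)
        = (-1)^q * Tcat (p+1) q - 4 * ((-1)^q * Tcat p q) := by
      rw [show p+(q+1)+1 = (p+q+1)+1 from by ring]; linarith [hco]
    rw [goal_eq]
    have := Tcat_rec p q
    rw [pow_succ]
    linear_combination ((-1:ℝ)^q) * this

lemma chooseZ_cast (m j : ℕ) : chooseZ m (j:ℤ) = (m.choose j : ℝ) := by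
  simp [chooseZ]

lemma chooseZ_neg (m : ℕ) {b : ℤ} (h : b < 0) : chooseZ m b = 0 := by
  simp [chooseZ, not_le.mpr h]

lemma sum_Icc_int (a : ℤ) (M : ℕ) (f : ℤ → ℝ) :
    ∑ s ∈ Finset.Icc a (a + (M:ℤ) - 1), f s = ∑ i ∈ Finset.range M, f (a + i) := by
  have hIcc : Finset.Icc a (a + (M:ℤ) - 1)
      = Finset.map ⟨fun i : ℕ => a + i, fun x y h => by exact_mod_cast add_left_cancel h⟩ (Finset.range M) := by
    ext t
    simp only [Finset.mem_Icc, Finset.mem_map, Finset.mem_range, Function.Embedding.coeFn_mk]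
    constructor
    · intro h; exact ⟨(t - a).toNat, by omega, by show a + (((t - a).toNat : ℕ) : ℤ) = t; omega⟩
    · rintro ⟨i, hi, rfl⟩; show a ≤ a + (i:ℤ) ∧ a + (i:ℤ) ≤ a + (M:ℤ) - 1; omega
  rw [hIcc, Finset.sum_map]
  rfl

lemma sum_eq_coeff (n m u : ℕ) :
    ∑ v ∈ Finset.range (n+1), (-1:ℝ)^v * (n.choose v : ℝ) * chooseZ m ((u:ℤ) - v)
    = ((1-X)^n * (1+X)^m : ℝ[X]).coeff u := by
  rw [Polynomial.coeff_mul, Finset.Nat.sum_antidiagonal_eq_sum_range_succ_mk]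
  simp only [coeffA, coeffB]
  have hL : ∑ v ∈ Finset.range (n+1), (-1:ℝ)^v * (n.choose v : ℝ) * chooseZ m ((u:ℤ) - v)
      = ∑ v ∈ Finset.range (n+u+2), (-1:ℝ)^v * (n.choose v : ℝ) * chooseZ m ((u:ℤ) - v) := by
    apply Finset.sum_subset (Finset.range_subset_range.mpr (by omega))
    intro x _ hnx
    simp only [Finset.mem_range, not_lt] at hnx
    rw [Nat.choose_eq_zero_of_lt (by omega)]
    simp
  have hR : ∑ k ∈ Finset.range (u+1), (-1:ℝ)^k * (n.choose k : ℝ) * (m.choose (u-k) : ℝ)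
      = ∑ v ∈ Finset.range (n+u+2), (-1:ℝ)^v * (n.choose v : ℝ) * chooseZ m ((u:ℤ) - v) := by
    rw [← Finset.sum_subset (Finset.range_subset_range.mpr (show u+1 ≤ n+u+2 by omega))
      (fun x _ hnx => by
        simp only [Finset.mem_range, not_lt] at hnx
        rw [chooseZ_neg m (show (u:ℤ) - x < 0 by omega)]
        ring)]
    refine Finset.sum_congr rfl fun k hk => ?_
    simp only [Finset.mem_range] at hk
    rw [show (u:ℤ) - k = ((u - k : ℕ) : ℤ) by omega, chooseZ_cast]
  rw [hL, ← hR]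

lemma step3 (p q nn : ℕ) (hq2 : nn = 2*q+1) (i : ℕ) :
    ∑ v ∈ Finset.range (nn+1), (-1:ℝ)^v * (nn.choose v : ℝ) * chooseZ (2*p+1) ((p:ℤ)+q+1+1-v+i)
    = ((1-X)^(2*q)*(1+X)^(2*p+1) : ℝ[X]).coeff (p+q+1+i+1)
      - ((1-X)^(2*q)*(1+X)^(2*p+1) : ℝ[X]).coeff (p+q+1+i) := by
  have h1 : ∀ v : ℕ, (p:ℤ)+q+1+1-v+i = ((p+q+1+i+1 : ℕ):ℤ) - v := by
    intro v; push_cast; ring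
  simp only [h1]
  rw [sum_eq_coeff nn (2*p+1) (p+q+1+i+1), hq2]
  have hf : ((1-X)^(2*q+1) * (1+X)^(2*p+1) : ℝ[X])
      = ((1-X)^(2*q)*(1+X)^(2*p+1)) - X * ((1-X)^(2*q)*(1+X)^(2*p+1)) := by
    rw [pow_succ]; ring
  rw [hf, Polynomial.coeff_sub, Polynomial.coeff_X_mul]

/-- For `N` even and `n` odd with `n ≤ N`,
`∑_{v=0}^n ∑_{s=N/2+1-v}^{N-v} (-1)^v C(n,v) C(N-n, s)
  = (-1)^{(n+1)/2} T((N-n-1)/2, (n-1)/2)`. -/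
theorem super_catalan_identity (N n : ℕ) (hN : 0 < N) (hNe : Even N)
    (hn : Odd n) (hnN : n ≤ N) :
    ∑ v ∈ Finset.range (n + 1),
        ∑ s ∈ Finset.Icc ((N : ℤ) / 2 + 1 - v) ((N : ℤ) - v),
          (-1 : ℝ) ^ v * (n.choose v : ℝ) * chooseZ (N - n) s
      = (-1 : ℝ) ^ ((n + 1) / 2) * Tcat ((N - n - 1) / 2) ((n - 1) / 2) := by
  obtain ⟨q, hq2⟩ := hn
  obtain ⟨c, hc⟩ := hNe
  obtain ⟨p, hp⟩ : ∃ p, N - n = 2*p+1 := ⟨(N-n-1)/2, by omega⟩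
  have hN2 : N = 2*p+2*q+2 := by omega
  simp only [hp]
  have hdeg : ((1-X)^(2*q)*(1+X)^(2*p+1) : ℝ[X]).natDegree < p+q+1+(p+q+1) := by
    have d1 : (1 - X : ℝ[X]).natDegree = 1 := by
      rw [show (1 - X : ℝ[X]) = -(X - C 1) by rw [Polynomial.C_1]; ring, natDegree_neg, natDegree_X_sub_C]
    have d2 : (1 + X : ℝ[X]).natDegree = 1 := by
      rw [show (1 + X : ℝ[X]) = X + C 1 by rw [Polynomial.C_1]; ring, natDegree_X_add_C]
    have h1 := Polynomial.natDegree_mul_le (p := ((1-X:ℝ[X])^(2*q))) (q := ((1+X:ℝ[X])^(2*p+1)))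
    have h2 := Polynomial.natDegree_pow_le (p := (1-X:ℝ[X])) (n := 2*q)
    have h3 := Polynomial.natDegree_pow_le (p := (1+X:ℝ[X])) (n := 2*p+1)
    rw [d1] at h2
    rw [d2] at h3
    omega
  have hLHS : ∑ v ∈ Finset.range (n + 1),
        ∑ s ∈ Finset.Icc ((N : ℤ) / 2 + 1 - v) ((N : ℤ) - v),
          (-1 : ℝ) ^ v * (n.choose v : ℝ) * chooseZ (2*p+1) s
      = -(((1-X)^(2*q)*(1+X)^(2*p+1) : ℝ[X]).coeff (p+q+1)) := by
    calc ∑ v ∈ Finset.range (n + 1),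
        ∑ s ∈ Finset.Icc ((N : ℤ) / 2 + 1 - v) ((N : ℤ) - v),
          (-1 : ℝ) ^ v * (n.choose v : ℝ) * chooseZ (2*p+1) s
        = ∑ v ∈ Finset.range (n + 1), ∑ i ∈ Finset.range (p+q+1),
            (-1 : ℝ) ^ v * (n.choose v : ℝ) * chooseZ (2*p+1) ((p:ℤ)+q+1+1-v+i) := by
          refine Finset.sum_congr rfl fun v hv => ?_
          rw [show Finset.Icc ((N:ℤ)/2+1-(v:ℤ)) ((N:ℤ)-(v:ℤ))
              = Finset.Icc ((p:ℤ)+q+1+1-v) (((p:ℤ)+q+1+1-v) + ((p+q+1 : ℕ):ℤ) - 1) from by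
            congr 1 <;> omega]
          exact sum_Icc_int _ _ _
      _ = ∑ i ∈ Finset.range (p+q+1), ∑ v ∈ Finset.range (n + 1),
            (-1 : ℝ) ^ v * (n.choose v : ℝ) * chooseZ (2*p+1) ((p:ℤ)+q+1+1-v+i) :=
          Finset.sum_comm
      _ = ∑ i ∈ Finset.range (p+q+1),
            (((1-X)^(2*q)*(1+X)^(2*p+1) : ℝ[X]).coeff (p+q+1+(i+1))
              - ((1-X)^(2*q)*(1+X)^(2*p+1) : ℝ[X]).coeff (p+q+1+i)) := by
          refine Finset.sum_congr rfl fun i hi => ?_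
          rw [show p+q+1+(i+1) = p+q+1+i+1 by omega]
          exact step3 p q n hq2 i
      _ = ((1-X)^(2*q)*(1+X)^(2*p+1) : ℝ[X]).coeff (p+q+1+(p+q+1))
            - ((1-X)^(2*q)*(1+X)^(2*p+1) : ℝ[X]).coeff (p+q+1+0) :=
          Finset.sum_range_sub (fun j => ((1-X)^(2*q)*(1+X)^(2*p+1) : ℝ[X]).coeff (p+q+1+j))
            (p+q+1)
      _ = -(((1-X)^(2*q)*(1+X)^(2*p+1) : ℝ[X]).coeff (p+q+1)) := by
          rw [Polynomial.coeff_eq_zero_of_natDegree_lt hdeg, show p+q+1+0 = p+q+1 from rfl]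
          ring
  rw [hLHS, keyA q p, show (n+1)/2 = q+1 by omega, show (n-1)/2 = q by omega,
    show (2*p+1-1)/2 = p by omega, pow_succ]
  ring
end

section
/- For all nonnegative integers p and q, ∑_{v=0}^{2q+1} ∑_{s=p+q+2-v}^{2p+2q+2-v} (-1)^v · C(2q+1, v) · C(2p+1, s) = - ∑_{v=0}^{2q} (-1)^v · C(2q, v) · C(2p+1, p+q+1-v). -/
/-!
Every upper limit `2p + 2q + 2 - v` is at least `2p + 1`, so the inner sum is the tail
`T(v) = ∑_{s ≥ p + q + 2 - v} C(2p+1, s)`. The outer sum is `(-1)^(2q+1)` times the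
`(2q+1)`-st forward difference of `T` at `0`; peeling off one difference, with
`ΔT(v) = C(2p+1, p+q+1-v)`, leaves the `2q`-th difference that is the right-hand side.
-/

open Finset fwdDiff

theorem sum_range_neg_one_pow_mul_choose_mul_eq_fwdDiff_iter {R : Type*} [CommRing R]
    (f : ℕ → R) (n : ℕ) :
    ∑ k ∈ range (n + 1), (-1 : R) ^ k * n.choose k * f k = (-1) ^ n * (Δ_[1])^[n] f 0 := by
  rw [fwdDiff_iter_eq_sum_shift, mul_sum]
  refine sum_congr rfl fun k hk_mem => ?_
  have hk : k ≤ n := Nat.lt_succ_iff.mp (mem_range.mp hk_mem)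
  rw [zsmul_eq_mul, zero_add, smul_eq_mul, mul_one]
  push_cast
  rw [← mul_assoc, ← mul_assoc, ← pow_add, show n + (n - k) = k + 2 * (n - k) by omega,
    pow_add, pow_mul, neg_one_sq, one_pow, mul_one]

theorem sum_range_neg_one_pow_mul_choose_succ_mul_eq_neg_fwdDiff {R : Type*} [CommRing R]
    (f : ℕ → R) (n : ℕ) :
    ∑ k ∈ range (n + 2), (-1 : R) ^ k * (n + 1).choose k * f k
      = -∑ k ∈ range (n + 1), (-1 : R) ^ k * n.choose k * Δ_[1] f k := by
  simp only [sum_range_neg_one_pow_mul_choose_mul_eq_fwdDiff_iter, Function.iterate_succ_apply,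
    pow_succ]
  ring

theorem chooseZ_eq_zero_of_lt {a : ℕ} {b : ℤ} (h : (a : ℤ) < b) : chooseZ a b = 0 := by
  rw [chooseZ, if_pos (by omega), Nat.choose_eq_zero_of_lt (by omega), Nat.cast_zero]

theorem sum_Icc_chooseZ_eq_of_le {a : ℕ} {m N M : ℤ} (haN : a ≤ N) (hNM : N ≤ M) :
    ∑ s ∈ Icc m N, chooseZ a s = ∑ s ∈ Icc m M, chooseZ a s :=
  sum_subset (Icc_subset_Icc_right hNM) fun s hs hsN =>
    chooseZ_eq_zero_of_lt (by simp only [mem_Icc] at hs hsN; omega)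

/-- For all nonnegative integers `p, q`,
`∑_{v=0}^{2q+1} ∑_{s=p+q+2-v}^{2p+2q+2-v} (-1)^v C(2q+1, v) C(2p+1, s)
  = - ∑_{v=0}^{2q} (-1)^v C(2q, v) C(2p+1, p+q+1-v)`. -/
theorem double_sum_reduction (p q : ℕ) :
    ∑ v ∈ Finset.range (2 * q + 2),
        ∑ s ∈ Finset.Icc ((p : ℤ) + q + 2 - v) (2 * (p : ℤ) + 2 * q + 2 - v),
          (-1 : ℝ) ^ v * ((2 * q + 1).choose v : ℝ) * chooseZ (2 * p + 1) s
      = - ∑ v ∈ Finset.range (2 * q + 1),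
          (-1 : ℝ) ^ v * ((2 * q).choose v : ℝ) *
            chooseZ (2 * p + 1) ((p : ℤ) + q + 1 - v) := by
  set tail : ℕ → ℝ := fun v => ∑ s ∈ Icc ((p : ℤ) + q + 2 - v) (2 * p + 2 * q + 2),
    chooseZ (2 * p + 1) s
  have h_inner : ∀ v ∈ range (2 * q + 2),
      ∑ s ∈ Icc ((p : ℤ) + q + 2 - v) (2 * (p : ℤ) + 2 * q + 2 - v),
          (-1 : ℝ) ^ v * ((2 * q + 1).choose v : ℝ) * chooseZ (2 * p + 1) s
        = (-1) ^ v * ((2 * q + 1).choose v : ℝ) * tail v := fun v hv_mem => by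
    have hv := mem_range.mp hv_mem
    rw [← mul_sum,
      sum_Icc_chooseZ_eq_of_le (M := 2 * p + 2 * q + 2) (by push_cast; omega) (by omega)]
  have h_diff : ∀ v : ℕ, Δ_[1] tail v = chooseZ (2 * p + 1) ((p : ℤ) + q + 1 - v) := fun v => by
    have h_lower : (p : ℤ) + q + 2 - v = (p + q + 1 - v) + 1 := by ring
    have h_succ : (p : ℤ) + q + 2 - (v + 1) = p + q + 1 - v := by ring
    simp only [fwdDiff, tail, Nat.cast_add, Nat.cast_one, h_succ, h_lower,
      Icc_add_one_left_eq_Ioc]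
    rw [← add_sum_Ioc_eq_sum_Icc (by omega), add_sub_cancel_right]
  rw [sum_congr rfl h_inner, sum_range_neg_one_pow_mul_choose_succ_mul_eq_neg_fwdDiff]
  simp only [h_diff]
end

section
/- For all nonnegative integers p and q, ∑_{v=0}^{2q} (-1)^v · C(2q, v) · C(2p+1, p+q+1-v) = (-1)^q · C(2p+1, p) · C(2q, q) / C(p+q+1, q). Equivalently, the coefficient of x^{p+q+1} in the polynomial (1-x)^{2q}·(1+x)^{2p+1} equals (-1)^q · C(2p+1, p) · C(2q, q) / C(p+q+1, q). -/
section Aux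
open Polynomial Finset


noncomputable def Fpq (p q : ℕ) : Polynomial ℝ := (1 - X) ^ (2 * q) * (1 + X) ^ (2 * p + 1)

lemma one_sub_X_ne : (1 - X : ℝ[X]) ≠ 0 := fun h => by
  have := congrArg (fun f => Polynomial.coeff f 1) h
  simp [coeff_one] at this

lemma one_add_X_ne : (1 + X : ℝ[X]) ≠ 0 := fun h => by
  have := congrArg (fun f => Polynomial.coeff f 1) h
  simp [coeff_one] at this

lemma natDegree_one_sub_X : (1 - X : ℝ[X]).natDegree = 1 := by
  have h : (1 - X : ℝ[X]) = -(X - C 1) := by rw [C_1]; ring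
  rw [h, natDegree_neg, natDegree_X_sub_C]

lemma natDegree_one_add_X : (1 + X : ℝ[X]).natDegree = 1 := by
  have h : (1 + X : ℝ[X]) = X + C 1 := by rw [C_1]; ring
  rw [h, natDegree_X_add_C]

lemma natDegree_Fpq (p q : ℕ) : (Fpq p q).natDegree = 2 * p + 2 * q + 1 := by
  rw [Fpq, natDegree_mul (pow_ne_zero _ one_sub_X_ne) (pow_ne_zero _ one_add_X_ne),
    natDegree_pow, natDegree_pow, natDegree_one_sub_X, natDegree_one_add_X]
  ring

lemma coeff_one_sub_X_pow (n k : ℕ) :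
    ((1 - X : ℝ[X]) ^ n).coeff k = (-1 : ℝ) ^ k * n.choose k := by
  have h : (1 - X : ℝ[X]) = (-1 : ℝ[X]) * (X + C (-1)) := by
    simp; ring
  rw [h, mul_pow, ← C_1, ← C_neg, ← C_pow, coeff_C_mul, coeff_X_add_C_pow]
  rcases le_or_gt k n with hk | hk
  · rw [← mul_assoc, ← pow_add]
    have h2 : (-1 : ℝ) ^ (n + (n - k)) = (-1) ^ k := by
      rw [show n + (n - k) = k + 2 * (n - k) by omega, pow_add, pow_mul]
      simp
    rw [h2]
  · simp [Nat.choose_eq_zero_of_lt hk]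

lemma coeff_one_add_X_pow' (n k : ℕ) :
    ((1 + X : ℝ[X]) ^ n).coeff k = n.choose k := by
  rw [add_comm]
  exact_mod_cast coeff_X_add_one_pow ℝ n k

lemma rev_pow {R : Type*} [CommRing R] [NoZeroDivisors R] (f : R[X]) (n : ℕ) :
    (f ^ n).reverse = f.reverse ^ n := by
  induction n with
  | zero => simp [reverse]
  | succ n ih => rw [pow_succ, reverse_mul_of_domain, ih, pow_succ]

lemma rev_one_add_X : (1 + X : ℝ[X]).reverse = 1 + X := by
  have h : (1 + X : ℝ[X]).natDegree = 1 := by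
    have h : (1 + X : ℝ[X]) = X + C 1 := by rw [C_1]; ring
    rw [h, natDegree_X_add_C]
  rw [reverse, h]
  have : (1 + X : ℝ[X]) = C 1 + X ^ 1 := by simp
  rw [this, reflect_add, reflect_C, reflect_monomial]
  simp [revAt_le]
  ring

lemma rev_one_sub_X : (1 - X : ℝ[X]).reverse = -(1 - X) := by
  have h : (1 - X : ℝ[X]).natDegree = 1 := by
    have h : (1 - X : ℝ[X]) = -(X - C 1) := by rw [C_1]; ring
    rw [h, natDegree_neg, natDegree_X_sub_C]
  rw [reverse, h]
  have : (1 - X : ℝ[X]) = C 1 + C (-1) * X ^ 1 := by simp; ring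
  rw [this, reflect_add, reflect_C, reflect_C_mul_X_pow]
  simp [revAt_le]

lemma rev_Fpq (p q : ℕ) : (Fpq p q).reverse = Fpq p q := by
  rw [Fpq, reverse_mul_of_domain, rev_pow, rev_pow, rev_one_add_X, rev_one_sub_X,
    Even.neg_pow ⟨q, by ring⟩]

lemma pal (p q n : ℕ) (hn : n ≤ 2 * p + 2 * q + 1) :
    (Fpq p q).coeff n = (Fpq p q).coeff (2 * p + 2 * q + 1 - n) := by
  conv_lhs => rw [← rev_Fpq, coeff_reverse, natDegree_Fpq, revAt_le hn]

lemma ode (p q : ℕ) :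
    (1 - X) * (1 + X) * derivative (Fpq p q) =
      Fpq p q * (C ((2 * p + 1 : ℕ) : ℝ) * (1 - X) - C ((2 * q : ℕ) : ℝ) * (1 + X)) := by
  rw [Fpq, derivative_mul, derivative_pow, derivative_pow]
  have d1 : derivative (1 - X : ℝ[X]) = -1 := by simp
  have d2 : derivative (1 + X : ℝ[X]) = 1 := by simp
  rw [d1, d2]
  cases q with
  | zero =>
    simp only [Nat.mul_zero, Nat.cast_zero, map_zero, Nat.zero_sub, pow_zero,
      Nat.add_sub_cancel]
    push_cast
    ring
  | succ q =>
    have e1 : 2 * (q + 1) - 1 = 2 * q + 1 := by omega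
    have e2 : 2 * p + 1 - 1 = 2 * p := by omega
    rw [e1, e2]
    have e3 : 2 * (q + 1) = (2 * q + 1) + 1 := by omega
    rw [e3]
    push_cast
    ring

lemma ode_coeff (p q : ℕ) :
    ((p : ℝ) + q + 2) * (Fpq p q).coeff (p + q + 2)
      = (2 * (p : ℝ) + 1) * ((Fpq p q).coeff (p + q + 1) - (Fpq p q).coeff (p + q))
        - 2 * (q : ℝ) * ((Fpq p q).coeff (p + q + 1) + (Fpq p q).coeff (p + q))
        + ((p : ℝ) + q) * (Fpq p q).coeff (p + q) := by
  have h := congrArg (fun f : ℝ[X] => f.coeff (p + q + 1)) (ode p q)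
  set F := Fpq p q with hF
  set g := derivative F with hg
  have lhs_eq : (1 - X) * (1 + X) * g = g - g * X ^ 2 := by ring
  have rhs_eq : F * (C ((2 * p + 1 : ℕ) : ℝ) * (1 - X) - C ((2 * q : ℕ) : ℝ) * (1 + X))
      = C ((2 * p + 1 : ℕ) : ℝ) * F - C ((2 * p + 1 : ℕ) : ℝ) * (F * X)
        - (C ((2 * q : ℕ) : ℝ) * F + C ((2 * q : ℕ) : ℝ) * (F * X)) := by ring
  rw [lhs_eq, rhs_eq] at h
  have hgc : ∀ n : ℕ, g.coeff n = F.coeff (n + 1) * ((n : ℝ) + 1) := by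
    intro n; rw [hg, coeff_derivative]
  have hX2 : (g * X ^ 2).coeff (p + q + 1) = ((p : ℝ) + q) * F.coeff (p + q) := by
    rcases Nat.eq_zero_or_pos (p + q) with h0 | h0
    · rw [coeff_mul_X_pow', if_neg (by omega : ¬ (2 ≤ p + q + 1))]
      have hpq : (p : ℝ) + q = 0 := by exact_mod_cast h0
      rw [hpq, zero_mul]
    · obtain ⟨m, hm⟩ : ∃ m, p + q = m + 1 := ⟨p + q - 1, by omega⟩
      have : p + q + 1 = m + 2 := by omega
      rw [this, coeff_mul_X_pow, hgc, hm]
      have hpq : (p : ℝ) + q = (m : ℝ) + 1 := by exact_mod_cast hm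
      rw [hpq]
      ring
  rw [coeff_sub, coeff_sub, coeff_sub, coeff_add, coeff_C_mul, coeff_C_mul, coeff_C_mul,
    coeff_C_mul, coeff_mul_X, hX2, hgc] at h
  have e : p + q + 1 + 1 = p + q + 2 := by omega
  rw [e] at h
  push_cast at h
  linarith [h]

lemma pal' (p q : ℕ) : (Fpq p q).coeff (p + q) = (Fpq p q).coeff (p + q + 1) := by
  have h := pal p q (p + q) (by omega)
  rwa [show 2 * p + 2 * q + 1 - (p + q) = p + q + 1 by omega] at h

lemma key_s16 (p q : ℕ) :
    ((p : ℝ) + q + 2) * (Fpq p (q + 1)).coeff (p + q + 2)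
      = -(2 * (2 * (q : ℝ) + 1)) * (Fpq p q).coeff (p + q + 1) := by
  have hF : Fpq p (q + 1)
      = Fpq p q - (Fpq p q * X ^ 1 + Fpq p q * X ^ 1) + Fpq p q * X ^ 2 := by
    rw [Fpq, Fpq, show 2 * (q + 1) = 2 * q + 2 by omega]
    ring
  have hc : (Fpq p (q + 1)).coeff (p + q + 2)
      = (Fpq p q).coeff (p + q + 2) - 2 * (Fpq p q).coeff (p + q + 1)
        + (Fpq p q).coeff (p + q) := by
    rw [hF, coeff_add, coeff_sub, coeff_add]
    simp only [coeff_mul_X_pow']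
    rw [if_pos (by omega : 1 ≤ p + q + 2), if_pos (by omega : 2 ≤ p + q + 2),
      show p + q + 2 - 1 = p + q + 1 by omega, show p + q + 2 - 2 = p + q by omega]
    ring
  rw [hc]
  linear_combination ode_coeff p q + pal' p q


lemma Tstep (p q : ℕ) :
    ((p : ℝ) + q + 2) * Tcat p (q + 1) = 2 * (2 * (q : ℝ) + 1) * Tcat p q := by
  have f1 : ((p.factorial : ℝ)) ≠ 0 := by exact_mod_cast p.factorial_ne_zero
  have f2 : ((q.factorial : ℝ)) ≠ 0 := by exact_mod_cast q.factorial_ne_zero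
  have f3 : (((q+1).factorial : ℝ)) ≠ 0 := by exact_mod_cast (q+1).factorial_ne_zero
  have f4 : (((p + q + 1).factorial : ℝ)) ≠ 0 := by
    exact_mod_cast (p + q + 1).factorial_ne_zero
  have f5 : (((p + q + 2).factorial : ℝ)) ≠ 0 := by
    exact_mod_cast (p + q + 2).factorial_ne_zero
  rw [Tcat, Tcat, show 2 * (q + 1) = (2 * q + 1) + 1 by omega,
    Nat.factorial_succ (2 * q + 1), Nat.factorial_succ (2 * q),
    Nat.factorial_succ q, show p + (q + 1) + 1 = (p + q + 1) + 1 by omega,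
    Nat.factorial_succ (p + q + 1)]
  push_cast
  field_simp
  ring

lemma rhs_eq (p q : ℕ) :
    (-1 : ℝ) ^ q * ((2 * p + 1).choose p : ℝ) * ((2 * q).choose q : ℝ) /
        ((p + q + 1).choose q : ℝ)
      = (-1 : ℝ) ^ q * Tcat p q := by
  have f1 : ((p.factorial : ℝ)) ≠ 0 := by exact_mod_cast p.factorial_ne_zero
  have f2 : ((q.factorial : ℝ)) ≠ 0 := by exact_mod_cast q.factorial_ne_zero
  have f3 : (((p+1).factorial : ℝ)) ≠ 0 := by exact_mod_cast (p+1).factorial_ne_zero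
  have f4 : (((p + q + 1).factorial : ℝ)) ≠ 0 := by
    exact_mod_cast (p + q + 1).factorial_ne_zero
  rw [Tcat, Nat.cast_choose ℝ (show p ≤ 2 * p + 1 by omega),
    Nat.cast_choose ℝ (show q ≤ 2 * q by omega),
    Nat.cast_choose ℝ (show q ≤ p + q + 1 by omega),
    show 2 * p + 1 - p = p + 1 by omega, show 2 * q - q = q by omega,
    show p + q + 1 - q = p + 1 by omega]
  field_simp


lemma sum_trim (p q : ℕ) :
    (∑ v ∈ Finset.range (2 * q + 1),
        (-1 : ℝ) ^ v * ((2 * q).choose v : ℝ) * chooseZ (2 * p + 1) ((p : ℤ) + q + 1 - v))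
      = ∑ v ∈ Finset.range (p + q + 2),
          (-1 : ℝ) ^ v * ((2 * q).choose v : ℝ) * ((2 * p + 1).choose (p + q + 1 - v) : ℝ) := by
  set N := 2 * q + 1 + (p + q + 2) with hN
  have h1 : (∑ v ∈ Finset.range (2 * q + 1),
        (-1 : ℝ) ^ v * ((2 * q).choose v : ℝ) * chooseZ (2 * p + 1) ((p : ℤ) + q + 1 - v))
      = ∑ v ∈ Finset.range N,
        (-1 : ℝ) ^ v * ((2 * q).choose v : ℝ) * chooseZ (2 * p + 1) ((p : ℤ) + q + 1 - v) := by
    apply Finset.sum_subset (Finset.range_subset_range.mpr (by omega))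
    intro x _ hx
    rw [Finset.mem_range, not_lt] at hx
    rw [Nat.choose_eq_zero_of_lt (by omega)]
    simp
  have h2 : (∑ v ∈ Finset.range (p + q + 2),
        (-1 : ℝ) ^ v * ((2 * q).choose v : ℝ) * ((2 * p + 1).choose (p + q + 1 - v) : ℝ))
      = ∑ v ∈ Finset.range N,
        (-1 : ℝ) ^ v * ((2 * q).choose v : ℝ) * chooseZ (2 * p + 1) ((p : ℤ) + q + 1 - v) := by
    have step1 : (∑ v ∈ Finset.range (p + q + 2),
          (-1 : ℝ) ^ v * ((2 * q).choose v : ℝ) * ((2 * p + 1).choose (p + q + 1 - v) : ℝ))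
        = ∑ v ∈ Finset.range (p + q + 2),
          (-1 : ℝ) ^ v * ((2 * q).choose v : ℝ) * chooseZ (2 * p + 1) ((p : ℤ) + q + 1 - v) := by
      apply Finset.sum_congr rfl
      intro v hv
      rw [Finset.mem_range] at hv
      have hnn : (0 : ℤ) ≤ (p : ℤ) + q + 1 - v := by omega
      have htn : ((p : ℤ) + q + 1 - v).toNat = p + q + 1 - v := by omega
      simp only [chooseZ, if_pos hnn, htn]
    rw [step1]
    apply Finset.sum_subset (Finset.range_subset_range.mpr (by omega : p + q + 2 ≤ N))
    intro x _ hx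
    rw [Finset.mem_range, not_lt] at hx
    have hneg : ¬ (0 : ℤ) ≤ (p : ℤ) + q + 1 - x := by omega
    simp only [chooseZ, if_neg hneg]
    ring
  rw [h1, h2]

lemma coeff_as_sum (p q : ℕ)
    (c1 : ∀ k, ((1 - X : ℝ[X]) ^ (2 * q)).coeff k = (-1 : ℝ) ^ k * ((2 * q).choose k : ℝ))
    (c2 : ∀ k, ((1 + X : ℝ[X]) ^ (2 * p + 1)).coeff k = ((2 * p + 1).choose k : ℝ)) :
    ((1 - X) ^ (2 * q) * (1 + X) ^ (2 * p + 1) : ℝ[X]).coeff (p + q + 1)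
      = ∑ v ∈ Finset.range (p + q + 2),
          (-1 : ℝ) ^ v * ((2 * q).choose v : ℝ) * ((2 * p + 1).choose (p + q + 1 - v) : ℝ) := by
  rw [coeff_mul, Finset.Nat.sum_antidiagonal_eq_sum_range_succ_mk]
  apply Finset.sum_congr rfl
  intro v _
  rw [c1, c2]

lemma central (p q : ℕ) : (Fpq p q).coeff (p + q + 1) = (-1 : ℝ) ^ q * Tcat p q := by
  induction q with
  | zero =>
    rw [Fpq]
    simp only [Nat.mul_zero, pow_zero, one_mul, Nat.add_zero, pow_zero]
    rw [coeff_one_add_X_pow', Tcat,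
      Nat.cast_choose ℝ (show p + 0 + 1 ≤ 2 * p + 1 by omega),
      show 2 * p + 1 - (p + 0 + 1) = p by omega]
    have f1 : ((p.factorial : ℝ)) ≠ 0 := by exact_mod_cast p.factorial_ne_zero
    have f3 : (((p + 0 + 1).factorial : ℝ)) ≠ 0 := by
      exact_mod_cast (p + 0 + 1).factorial_ne_zero
    simp only [Nat.mul_zero, Nat.factorial_zero, Nat.cast_one]
    ring
  | succ q ih =>
    have hk := key_s16 p q
    rw [ih] at hk
    have hT := Tstep p q
    have hpos : ((p : ℝ) + q + 2) ≠ 0 := by positivity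
    rw [show p + (q + 1) + 1 = p + q + 2 by omega]
    have hmain : ((p : ℝ) + q + 2) * (Fpq p (q + 1)).coeff (p + q + 2)
        = ((p : ℝ) + q + 2) * ((-1 : ℝ) ^ (q + 1) * Tcat p (q + 1)) := by
      rw [hk]
      linear_combination ((-1 : ℝ) ^ q) * hT
    exact mul_left_cancel₀ hpos hmain

end Aux

/-- For all nonnegative integers `p, q`,
`∑_{v=0}^{2q} (-1)^v C(2q, v) C(2p+1, p+q+1-v) = (-1)^q C(2p+1, p) C(2q, q) / C(p+q+1, q)`;
equivalently, the coefficient of `x^{p+q+1}` in `(1-x)^{2q} (1+x)^{2p+1}` equals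
`(-1)^q C(2p+1, p) C(2q, q) / C(p+q+1, q)`. -/
theorem alternating_sum_central_coeff (p q : ℕ) :
    (∑ v ∈ Finset.range (2 * q + 1),
        (-1 : ℝ) ^ v * ((2 * q).choose v : ℝ) *
          chooseZ (2 * p + 1) ((p : ℤ) + q + 1 - v)
      = (-1 : ℝ) ^ q * ((2 * p + 1).choose p : ℝ) * ((2 * q).choose q : ℝ) /
          ((p + q + 1).choose q : ℝ)) ∧
    (((1 - Polynomial.X) ^ (2 * q) * (1 + Polynomial.X) ^ (2 * p + 1) :
        Polynomial ℝ).coeff (p + q + 1)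
      = (-1 : ℝ) ^ q * ((2 * p + 1).choose p : ℝ) * ((2 * q).choose q : ℝ) /
          ((p + q + 1).choose q : ℝ)) := by
  have hcoeff : ((1 - Polynomial.X) ^ (2 * q) * (1 + Polynomial.X) ^ (2 * p + 1) :
      Polynomial ℝ).coeff (p + q + 1)
      = (-1 : ℝ) ^ q * ((2 * p + 1).choose p : ℝ) * ((2 * q).choose q : ℝ) /
          ((p + q + 1).choose q : ℝ) := by
    rw [rhs_eq]
    exact central p q
  refine ⟨?_, hcoeff⟩
  rw [sum_trim, ← coeff_as_sum p q (fun k => coeff_one_sub_X_pow (2 * q) k)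
    (fun k => coeff_one_add_X_pow' (2 * p + 1) k)]
  exact hcoeff
end
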